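/- arXiv:1611.03681 — 10 statements merged into one kernel-verified Lean document; each statement's English description precedes it below -/
import Mathlib

section
/- Let f : ℝⁿ × ℝ → ℝ be twice continuously differentiable, m-strongly convex in x uniformly in t (i.e. ∇²ₓₓ f(x;t) ⪰ m·I with m > 0), and suppose ‖∇_{tx} f(x;t)‖ ≤ C₀ for all x, t. Then the unique minimizer trajectory x*(t) := argmin_x f(x;t) is Lipschitz in time: for any t₁ ≤ t₂, ‖x*(t₂) − x*(t₁)‖ ≤ (C₀/m)(t₂ − t₁). -/
/-!
At a minimizer the gradient vanishes, so `G (x*(t₁)) t₁ = G (x*(t₂)) t₂ = 0`. Strong monotonicity of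
`G · t₂` then gives `m ‖x*(t₂) - x*(t₁)‖ ≤ ‖G (x*(t₁)) t₂‖ = ‖G (x*(t₁)) t₂ - G (x*(t₁)) t₁‖`,
and the time-Lipschitz bound on the gradient turns the right-hand side into `C₀ (t₂ - t₁)`.
-/

abbrev Eucl (n : ℕ) := EuclideanSpace ℝ (Fin n)

section

variable {E : Type*} [NormedAddCommGroup E] [InnerProductSpace ℝ E]

theorem IsMinOn.hasGradientAt_eq_zero [CompleteSpace E] {f : E → ℝ} {g x : E}
    (hmin : IsMinOn f Set.univ x) (hg : HasGradientAt f g x) : g = 0 :=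
  (InnerProductSpace.toDual ℝ E).map_eq_zero_iff.mp
    ((hmin.isLocalMin Filter.univ_mem).hasFDerivAt_eq_zero hg.hasFDerivAt)

theorem mul_norm_le_norm_of_mul_sq_le_inner {m : ℝ} {u d : E}
    (h : m * ‖d‖ ^ 2 ≤ inner ℝ u d) : m * ‖d‖ ≤ ‖u‖ := by
  rcases (norm_nonneg d).eq_or_lt with hd | hd
  · rw [← hd, mul_zero]
    exact norm_nonneg u
  · have : m * ‖d‖ * ‖d‖ ≤ ‖u‖ * ‖d‖ := by
      calc m * ‖d‖ * ‖d‖ = m * ‖d‖ ^ 2 := by ring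
        _ ≤ inner ℝ u d := h
        _ ≤ ‖u‖ * ‖d‖ := real_inner_le_norm u d
    exact le_of_mul_le_mul_right this hd

theorem mul_norm_sub_le_norm_of_strongly_monotone {F : E → E} {m : ℝ} {x x₀ : E}
    (hF : m * ‖x₀ - x‖ ^ 2 ≤ inner ℝ (F x₀ - F x) (x₀ - x)) (hx₀ : F x₀ = 0) :
    m * ‖x₀ - x‖ ≤ ‖F x‖ := by
  rw [← norm_neg (F x), ← zero_sub, ← hx₀]
  exact mul_norm_le_norm_of_mul_sq_le_inner hF

end

theorem stmt_0_general (n : ℕ) (f : Eucl n → ℝ → ℝ) (G : Eucl n → ℝ → Eucl n)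
    (xstar : ℝ → Eucl n) (m C₀ : ℝ)
    (hm : 0 < m)
    (hgrad : ∀ x t, HasGradientAt (fun y => f y t) (G x t) x)
    -- m-strong convexity in x, uniformly in t (Hessian ⪰ m I)
    (hstrong : ∀ t x y, m * ‖x - y‖ ^ 2 ≤ (inner ℝ (G x t - G y t) (x - y) : ℝ))
    -- ‖∇ₜₓ f(x;t)‖ ≤ C₀ : the gradient is C₀-Lipschitz in time
    (htime : ∀ x t s, ‖G x t - G x s‖ ≤ C₀ * |t - s|)
    -- x*(t) is the unique global minimizer of f(·;t)
    (hmin : ∀ t, IsMinOn (fun x => f x t) Set.univ (xstar t)) :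
    ∀ t₁ t₂ : ℝ, t₁ ≤ t₂ → ‖xstar t₂ - xstar t₁‖ ≤ (C₀ / m) * (t₂ - t₁) := by
  intro t₁ t₂ ht
  have hcrit : ∀ t, G (xstar t) t = 0 := fun t => (hmin t).hasGradientAt_eq_zero (hgrad _ t)
  have hbound : m * ‖xstar t₂ - xstar t₁‖ ≤ C₀ * (t₂ - t₁) := by
    calc m * ‖xstar t₂ - xstar t₁‖ ≤ ‖G (xstar t₁) t₂‖ :=
          mul_norm_sub_le_norm_of_strongly_monotone (F := (G · t₂)) (hstrong t₂ _ _) (hcrit t₂)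
      _ = ‖G (xstar t₁) t₂ - G (xstar t₁) t₁‖ := by rw [hcrit t₁, sub_zero]
      _ ≤ C₀ * |t₂ - t₁| := htime _ _ _
      _ = C₀ * (t₂ - t₁) := by rw [abs_of_nonneg (sub_nonneg.mpr ht)]
  rw [div_mul_eq_mul_div, le_div_iff₀ hm, mul_comm]
  exact hbound

/-- Lipschitz continuity in time of the minimizer trajectory. -/
theorem stmt_0 (n : ℕ) (f : Eucl n → ℝ → ℝ) (G : Eucl n → ℝ → Eucl n)
    (xstar : ℝ → Eucl n) (m C₀ : ℝ)
    (hm : 0 < m) (hC₀ : 0 ≤ C₀)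
    (hsmooth : ∀ t, ContDiff ℝ 2 (fun x => f x t))
    (hgrad : ∀ x t, HasGradientAt (fun y => f y t) (G x t) x)
    -- m-strong convexity in x, uniformly in t (Hessian ⪰ m I)
    (hstrong : ∀ t x y, m * ‖x - y‖ ^ 2 ≤ (inner ℝ (G x t - G y t) (x - y) : ℝ))
    -- ‖∇ₜₓ f(x;t)‖ ≤ C₀ : the gradient is C₀-Lipschitz in time
    (htime : ∀ x t s, ‖G x t - G x s‖ ≤ C₀ * |t - s|)
    -- x*(t) is the unique global minimizer of f(·;t)
    (hmin : ∀ t, IsMinOn (fun x => f x t) Set.univ (xstar t))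
    (huniq : ∀ t y, IsMinOn (fun x => f x t) Set.univ y → y = xstar t) :
    ∀ t₁ t₂ : ℝ, t₁ ≤ t₂ → ‖xstar t₂ - xstar t₁‖ ≤ (C₀ / m) * (t₂ - t₁) :=
  stmt_0_general n f G xstar m C₀ hm hgrad hstrong htime hmin
end

section
/- Let f : ℝⁿ → ℝ be m-strongly convex with L-Lipschitz gradient (0 < m ≤ L), let X ⊆ ℝⁿ be nonempty closed convex, and let x* be the minimizer of f over X. For step size α with 0 < α < 2/L, the projected gradient map T(x) = P_X(x − α∇f(x)) satisfies ‖T(x) − x*‖ ≤ ρ‖x − x*‖ for all x ∈ X, where ρ = max{|1 − αm|, |1 − αL|} < 1. -/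
section Aux


open InnerProductSpace

variable {E : Type*} [NormedAddCommGroup E] [InnerProductSpace ℝ E] [CompleteSpace E]

lemma lineDeriv' (h : E → ℝ) (G : E → E) (hg : ∀ p, HasGradientAt h (G p) p)
    (x d : E) (t : ℝ) :
    HasDerivAt (fun s : ℝ => h (x + s • d)) (inner ℝ (G (x + t • d)) d : ℝ) t := by
  have h1 : HasDerivAt (fun s : ℝ => x + s • d) d t := by
    simpa using ((hasDerivAt_id t).smul_const d).const_add x
  have h2 := (hg (x + t • d)).hasFDerivAt
  have := h2.comp_hasDerivAt t h1
  rw [toDual_apply_apply] at this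
  exact this

lemma grad_lower' (h : E → ℝ) (G : E → E) (hg : ∀ p, HasGradientAt h (G p) p)
    (hmono : ∀ a b, (0:ℝ) ≤ inner ℝ (G a - G b) (a - b)) (x y : E) :
    h x + (inner ℝ (G x) (y - x) : ℝ) ≤ h y := by
  set d := y - x with hd
  set c : ℝ := inner ℝ (G x) d with hc
  set ψ : ℝ → ℝ := fun s => h (x + s • d) - s * c with hψdef
  have hψ : ∀ s : ℝ, HasDerivAt ψ ((inner ℝ (G (x + s • d)) d : ℝ) - c) s := fun s =>
    (lineDeriv' h G hg x d s).sub (hasDerivAt_mul_const c)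
  have hmonoOn : MonotoneOn ψ (Set.Icc (0:ℝ) 1) := by
    apply monotoneOn_of_deriv_nonneg (convex_Icc 0 1)
    · exact fun s _ => (hψ s).continuousAt.continuousWithinAt
    · exact fun s _ => (hψ s).differentiableAt.differentiableWithinAt
    · intro s hs
      rw [interior_Icc] at hs
      rw [(hψ s).deriv]
      have h0 := hmono (x + s • d) x
      have heq : (x + s • d) - x = s • d := by abel
      rw [heq, real_inner_smul_right] at h0
      have : (0:ℝ) ≤ inner ℝ (G (x + s • d) - G x) d :=
        nonneg_of_mul_nonneg_right (by linarith [h0]) hs.1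
      rw [inner_sub_left] at this
      simp only [hc]
      linarith
  have h01 := hmonoOn (Set.mem_Icc.2 ⟨le_refl 0, zero_le_one⟩)
      (Set.mem_Icc.2 ⟨zero_le_one, le_refl 1⟩) zero_le_one
  have e0 : ψ 0 = h x := by simp [hψdef]
  have e1 : ψ 1 = h y - c := by
    simp only [hψdef, one_smul, one_mul, hd]
    rw [add_sub_cancel]
  rw [e0, e1] at h01
  linarith

lemma grad_upper' (h : E → ℝ) (G : E → E) (K : ℝ) (hg : ∀ p, HasGradientAt h (G p) p)
    (hup : ∀ a b, (inner ℝ (G a - G b) (a - b) : ℝ) ≤ K * ‖a - b‖ ^ 2) (x y : E) :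
    h y ≤ h x + (inner ℝ (G x) (y - x) : ℝ) + K / 2 * ‖y - x‖ ^ 2 := by
  set d := y - x with hd
  set c : ℝ := inner ℝ (G x) d with hc
  set χ : ℝ → ℝ := fun s => h (x + s • d) - s * c - K * s ^ 2 / 2 * ‖d‖ ^ 2 with hχdef
  have hχ : ∀ s : ℝ, HasDerivAt χ ((inner ℝ (G (x + s • d)) d : ℝ) - c - K * s * ‖d‖ ^ 2) s := by
    intro s
    have h1 : HasDerivAt (fun s : ℝ => K * s ^ 2 / 2 * ‖d‖ ^ 2) (K * s * ‖d‖ ^ 2) s := by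
      have : HasDerivAt (fun s : ℝ => s ^ 2) (2 * s) s := by
        simpa using hasDerivAt_pow 2 s
      have := ((this.const_mul K).div_const 2).mul_const (‖d‖ ^ 2)
      refine this.congr_deriv ?_
      ring
    exact ((lineDeriv' h G hg x d s).sub (hasDerivAt_mul_const c)).sub h1
  have hanti : AntitoneOn χ (Set.Icc (0:ℝ) 1) := by
    apply antitoneOn_of_deriv_nonpos (convex_Icc 0 1)
    · exact fun s _ => (hχ s).continuousAt.continuousWithinAt
    · exact fun s _ => (hχ s).differentiableAt.differentiableWithinAt
    · intro s hs
      rw [interior_Icc] at hs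
      rw [(hχ s).deriv]
      have h0 := hup (x + s • d) x
      have heq : (x + s • d) - x = s • d := by abel
      rw [heq, real_inner_smul_right, norm_smul] at h0
      have hnorm : (‖s‖ * ‖d‖) ^ 2 = s ^ 2 * ‖d‖ ^ 2 := by
        rw [mul_pow, Real.norm_eq_abs, sq_abs]
      rw [hnorm] at h0
      have key : (inner ℝ (G (x + s • d) - G x) d : ℝ) ≤ K * s * ‖d‖ ^ 2 := by
        have := mul_le_mul_of_nonneg_left h0 (le_of_lt (inv_pos.2 hs.1))
        rw [← mul_assoc, inv_mul_cancel₀ (ne_of_gt hs.1), one_mul] at this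
        calc (inner ℝ (G (x + s • d) - G x) d : ℝ)
            ≤ s⁻¹ * (K * (s ^ 2 * ‖d‖ ^ 2)) := this
          _ = K * s * ‖d‖ ^ 2 := by
              have hs0 : s ≠ 0 := ne_of_gt hs.1
              field_simp
      rw [inner_sub_left] at key
      simp only [hc]
      linarith
  have h01 := hanti (Set.mem_Icc.2 ⟨le_refl 0, zero_le_one⟩)
      (Set.mem_Icc.2 ⟨zero_le_one, le_refl 1⟩) zero_le_one
  have e0 : χ 0 = h x := by simp [hχdef]
  have e1 : χ 1 = h y - c - K / 2 * ‖d‖ ^ 2 := by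
    simp only [hχdef, one_smul, one_mul, one_pow, hd]
    rw [add_sub_cancel]
    ring_nf
  rw [e0, e1] at h01
  linarith

lemma coco' (h : E → ℝ) (G : E → E) (K : ℝ) (hK : 0 < K)
    (hg : ∀ p, HasGradientAt h (G p) p)
    (hmono : ∀ a b, (0:ℝ) ≤ inner ℝ (G a - G b) (a - b))
    (hup : ∀ a b, (inner ℝ (G a - G b) (a - b) : ℝ) ≤ K * ‖a - b‖ ^ 2) (x y : E) :
    ‖G x - G y‖ ^ 2 ≤ K * (inner ℝ (G x - G y) (x - y) : ℝ) := by
  -- key one-sided estimate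
  have key : ∀ a b : E, h a + (inner ℝ (G a) (b - a) : ℝ) + 1 / (2 * K) * ‖G b - G a‖ ^ 2 ≤ h b := by
    intro a b
    set z := b - (1 / K) • (G b - G a) with hz
    have A1 := grad_lower' h G hg hmono a z
    have A2 := grad_upper' h G K hg hup b z
    have e1 : z - b = -((1/K) • (G b - G a)) := by rw [hz]; abel
    have e2 : z - a = (b - a) - (1/K) • (G b - G a) := by rw [hz]; abel
    have i1 : (inner ℝ (G b) (z - b) : ℝ) = -(1/K) * inner ℝ (G b) (G b - G a) := by
      rw [e1, inner_neg_right, real_inner_smul_right]; ring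
    have i2 : ‖z - b‖ ^ 2 = (1/K)^2 * ‖G b - G a‖ ^ 2 := by
      rw [e1, norm_neg, norm_smul, mul_pow, Real.norm_eq_abs, sq_abs]
    have i3 : (inner ℝ (G a) (z - a) : ℝ) =
        inner ℝ (G a) (b - a) - (1/K) * inner ℝ (G a) (G b - G a) := by
      rw [e2, inner_sub_right, real_inner_smul_right]
    have i4 : (inner ℝ (G b) (G b - G a) : ℝ) - inner ℝ (G a) (G b - G a) = ‖G b - G a‖ ^ 2 := by
      rw [← inner_sub_left, real_inner_self_eq_norm_sq]
    rw [i3] at A1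
    rw [i1, i2] at A2
    have i4' : (1/K) * (inner ℝ (G b) (G b - G a) : ℝ) - (1/K) * inner ℝ (G a) (G b - G a)
        = (1/K) * ‖G b - G a‖ ^ 2 := by rw [← mul_sub, i4]
    have hq : K/2 * ((1/K)^2 * ‖G b - G a‖^2) + 1/(2*K) * ‖G b - G a‖^2
        = (1/K) * ‖G b - G a‖^2 := by field_simp; ring
    linarith [A1, A2, i4', hq]
  have k1 := key x y
  have k2 := key y x
  have e5 : (inner ℝ (G x) (y - x) : ℝ) + inner ℝ (G y) (x - y) =
      -(inner ℝ (G x - G y) (x - y) : ℝ) := by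
    rw [inner_sub_left]
    have : (inner ℝ (G x) (y - x) : ℝ) = - inner ℝ (G x) (x - y) := by
      rw [← inner_neg_right]; congr 1; abel
    rw [this]; ring
  have e6 : ‖G y - G x‖ = ‖G x - G y‖ := norm_sub_rev _ _
  rw [e6] at k1
  have : 2 * (1/(2*K)) * ‖G x - G y‖^2 ≤ (inner ℝ (G x - G y) (x - y) : ℝ) := by nlinarith [k1, k2, e5]
  have hKK : 2 * (1/(2*K)) = 1/K := by field_simp
  rw [hKK] at this
  rw [div_mul_eq_mul_div, one_mul] at this
  calc ‖G x - G y‖ ^ 2 = K * (‖G x - G y‖^2 / K) := by field_simp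
    _ ≤ K * (inner ℝ (G x - G y) (x - y) : ℝ) := by
        apply mul_le_mul_of_nonneg_left this hK.le

lemma grad_sq' (m : ℝ) (x : E) :
    HasGradientAt (fun p : E => m / 2 * ‖p‖ ^ 2) (m • x) x := by
  rw [hasGradientAt_iff_hasFDerivAt]
  have h1 : HasFDerivAt (fun p : E => ‖p‖ ^ 2) (2 • (innerSL ℝ x)) x :=
    (hasStrictFDerivAt_norm_sq x).hasFDerivAt
  have h2 := h1.const_mul (m / 2)
  refine h2.congr_fderiv ?_
  ext v
  simp [toDual_apply_apply, real_inner_smul_left, two_smul]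
  ring

lemma interp' (f : E → ℝ) (g : E → E) (m L : ℝ) (hm : 0 < m) (hmL : m ≤ L)
    (hgrad : ∀ x, HasGradientAt f (g x) x)
    (hstrong : ∀ x y, m * ‖x - y‖ ^ 2 ≤ (inner ℝ (g x - g y) (x - y) : ℝ))
    (hlip : ∀ x y, ‖g x - g y‖ ≤ L * ‖x - y‖) (x y : E) :
    ‖g x - g y‖ ^ 2 + m * L * ‖x - y‖ ^ 2 ≤ (m + L) * (inner ℝ (g x - g y) (x - y) : ℝ) := by
  have hcs : (inner ℝ (g x - g y) (x - y) : ℝ) ≤ ‖g x - g y‖ * ‖x - y‖ := real_inner_le_norm _ _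
  rcases eq_or_lt_of_le hmL with hEq | hLt
  · -- m = L
    subst hEq
    have h1 := hstrong x y
    have h2 := hlip x y
    have h3 : ‖g x - g y‖ ^ 2 ≤ m ^ 2 * ‖x - y‖ ^ 2 := by
      nlinarith [norm_nonneg (g x - g y), norm_nonneg (x - y)]
    nlinarith [h1, h3]
  · -- m < L : apply cocoercivity to h = f - m/2‖·‖²
    set h : E → ℝ := fun p => f p - m / 2 * ‖p‖ ^ 2 with hh
    set G : E → E := fun p => g p - m • p with hG
    have hg' : ∀ p, HasGradientAt h (G p) p := by
      intro p
      rw [hasGradientAt_iff_hasFDerivAt]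
      have := (hgrad p).hasFDerivAt.sub (grad_sq' m p).hasFDerivAt
      refine this.congr_fderiv ?_
      ext v
      simp [hG, toDual_apply_apply, inner_sub_left, real_inner_smul_left, ContinuousLinearMap.sub_apply]
    have hGsub : ∀ a b : E, G a - G b = (g a - g b) - m • (a - b) := by
      intro a b; simp only [hG]; rw [smul_sub]; abel
    have hGi : ∀ a b : E, (inner ℝ (G a - G b) (a - b) : ℝ)
        = inner ℝ (g a - g b) (a - b) - m * ‖a - b‖ ^ 2 := by
      intro a b
      rw [hGsub, inner_sub_left, real_inner_smul_left, real_inner_self_eq_norm_sq]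
    have hmono : ∀ a b, (0:ℝ) ≤ inner ℝ (G a - G b) (a - b) := by
      intro a b; rw [hGi]; linarith [hstrong a b]
    have hup : ∀ a b, (inner ℝ (G a - G b) (a - b) : ℝ) ≤ (L - m) * ‖a - b‖ ^ 2 := by
      intro a b
      rw [hGi]
      have h2 := hlip a b
      have := real_inner_le_norm (g a - g b) (a - b)
      nlinarith [norm_nonneg (a - b), norm_nonneg (g a - g b)]
    have hco := coco' h G (L - m) (by linarith) hg' hmono hup x y
    rw [hGi] at hco
    have hnorm : ‖G x - G y‖ ^ 2 = ‖g x - g y‖ ^ 2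
        - 2 * m * (inner ℝ (g x - g y) (x - y) : ℝ) + m ^ 2 * ‖x - y‖ ^ 2 := by
      rw [hGsub]
      rw [norm_sub_sq_real, real_inner_smul_right, norm_smul, Real.norm_eq_abs,
        abs_of_pos hm, mul_pow]
      ring
    rw [hnorm] at hco
    nlinarith [hco]

lemma nonexp' (X : Set E) (P : E → E) (hPmem : ∀ x, P x ∈ X)
    (hPchar : ∀ x, ∀ y ∈ X, (inner ℝ (x - P x) (y - P x) : ℝ) ≤ 0) (u v : E) :
    ‖P u - P v‖ ≤ ‖u - v‖ := by
  have h1 := hPchar u (P v) (hPmem v)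
  have h2 := hPchar v (P u) (hPmem u)
  have key : ‖P u - P v‖ ^ 2 ≤ (inner ℝ (u - v) (P u - P v) : ℝ) := by
    have e1 : (inner ℝ (u - P u) (P v - P u) : ℝ) = - inner ℝ (u - P u) (P u - P v) := by
      rw [← inner_neg_right]; congr 1; abel
    rw [e1] at h1
    have e2 : (inner ℝ (u - P u) (P u - P v) : ℝ) - inner ℝ (v - P v) (P u - P v)
        = inner ℝ (u - v) (P u - P v) - inner ℝ (P u - P v) (P u - P v) := by
      rw [← inner_sub_left, ← inner_sub_left]
      congr 1
      abel
    have e3 : (inner ℝ (P u - P v) (P u - P v) : ℝ) = ‖P u - P v‖ ^ 2 :=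
      real_inner_self_eq_norm_sq _
    linarith [h1, h2, e2, e3]
  have hcs := real_inner_le_norm (u - v) (P u - P v)
  by_cases hz : ‖P u - P v‖ = 0
  · rw [hz]; exact norm_nonneg _
  · have hpos : 0 < ‖P u - P v‖ := lt_of_le_of_ne (norm_nonneg _) (Ne.symm hz)
    nlinarith [key, hcs]

set_option maxHeartbeats 1000000 in
theorem pg_aux (n : ℕ) (f : EuclideanSpace ℝ (Fin n) → ℝ) (g : EuclideanSpace ℝ (Fin n) → EuclideanSpace ℝ (Fin n))
    (X : Set (EuclideanSpace ℝ (Fin n))) (P : EuclideanSpace ℝ (Fin n) → EuclideanSpace ℝ (Fin n)) (xstar : EuclideanSpace ℝ (Fin n)) (m L α : ℝ)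
    (hm : 0 < m) (hmL : m ≤ L)
    (hX : X.Nonempty) (hXc : IsClosed X) (hXconv : Convex ℝ X)
    (hgrad : ∀ x, HasGradientAt f (g x) x)
    (hstrong : ∀ x y, m * ‖x - y‖ ^ 2 ≤ (inner ℝ (g x - g y) (x - y) : ℝ))
    (hlip : ∀ x y, ‖g x - g y‖ ≤ L * ‖x - y‖)
    (hα : 0 < α) (hα2 : α < 2 / L)
    (hPmem : ∀ x, P x ∈ X)
    (hPchar : ∀ x, ∀ y ∈ X, (inner ℝ (x - P x) (y - P x) : ℝ) ≤ 0)
    (hmin : xstar ∈ X) (hminOn : IsMinOn f X xstar)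
    (hfix : xstar = P (xstar - α • g xstar)) :
    max |1 - α * m| |1 - α * L| < 1 ∧
      ∀ x ∈ X, ‖P (x - α • g x) - xstar‖ ≤ max |1 - α * m| |1 - α * L| * ‖x - xstar‖ := by
  have hL : 0 < L := lt_of_lt_of_le hm hmL
  have hαL : α * L < 2 := by
    calc α * L < (2 / L) * L := mul_lt_mul_of_pos_right hα2 hL
      _ = 2 := by field_simp
  have hαm : 0 < α * m := mul_pos hα hm
  have hαm2 : α * m < 2 := lt_of_le_of_lt (by nlinarith) hαL
  have hρ1 : max |1 - α * m| |1 - α * L| < 1 := by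
    rw [max_lt_iff]
    constructor <;> rw [abs_lt] <;> constructor <;> nlinarith
  refine ⟨hρ1, ?_⟩
  intro x hx
  set ρ := max |1 - α * m| |1 - α * L| with hρdef
  have hρ0 : 0 ≤ ρ := le_trans (abs_nonneg _) (le_max_left _ _)
  set d := x - xstar with hd
  set e := g x - g xstar with he
  have hsum : (0:ℝ) < m + L := by linarith
  have hst := hstrong x xstar
  have hlp := hlip x xstar
  have hin := interp' f g m L hm hmL hgrad hstrong hlip x xstar
  have hcs : (inner ℝ e d : ℝ) ≤ ‖e‖ * ‖d‖ := real_inner_le_norm _ _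
  have hem : m * ‖d‖ ≤ ‖e‖ := by
    by_cases hz : ‖d‖ = 0
    · rw [hz, mul_zero]; exact norm_nonneg _
    · have hpos : 0 < ‖d‖ := lt_of_le_of_ne (norm_nonneg _) (Ne.symm hz)
      nlinarith [hst, hcs]
  have hcontr : ‖d - α • e‖ ≤ ρ * ‖d‖ := by
    have hexp : ‖d - α • e‖ ^ 2 = ‖d‖ ^ 2 - 2 * α * (inner ℝ e d : ℝ) + α ^ 2 * ‖e‖ ^ 2 := by
      rw [norm_sub_sq_real, real_inner_smul_right, norm_smul, Real.norm_eq_abs,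
        abs_of_pos hα, mul_pow, real_inner_comm]
      ring
    have P1 : 0 ≤ α * ((m + L) * (inner ℝ e d : ℝ) - (‖e‖ ^ 2 + m * L * ‖d‖ ^ 2)) :=
      mul_nonneg hα.le (by linarith [hin])
    have hsq : ‖d - α • e‖ ^ 2 ≤ (ρ * ‖d‖) ^ 2 := by
      rcases le_or_gt (α * (m + L)) 2 with hc | hc
      · -- bound by (1 - αm)²
        have P2 : 0 ≤ (α * (2 - α * (m + L))) * (‖e‖ ^ 2 - m ^ 2 * ‖d‖ ^ 2) := by
          apply mul_nonneg (mul_nonneg hα.le (by linarith))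
          nlinarith [hem, norm_nonneg d]
        have key : (m + L) * ((1 - α * m) ^ 2 * ‖d‖ ^ 2
              - (‖d‖ ^ 2 - 2 * α * (inner ℝ e d : ℝ) + α ^ 2 * ‖e‖ ^ 2))
            = 2 * (α * ((m + L) * (inner ℝ e d : ℝ) - (‖e‖ ^ 2 + m * L * ‖d‖ ^ 2)))
              + (α * (2 - α * (m + L))) * (‖e‖ ^ 2 - m ^ 2 * ‖d‖ ^ 2) := by
          ring
        have h3 : 0 ≤ (m + L) * ((1 - α * m) ^ 2 * ‖d‖ ^ 2
            - (‖d‖ ^ 2 - 2 * α * (inner ℝ e d : ℝ) + α ^ 2 * ‖e‖ ^ 2)) := by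
          rw [key]; linarith
        have h4 := nonneg_of_mul_nonneg_right h3 hsum
        have habs : (1 - α * m) ^ 2 ≤ ρ ^ 2 := by
          rw [← sq_abs (1 - α * m)]
          exact pow_le_pow_left₀ (abs_nonneg _) (le_max_left _ _) 2
        have h5 : (1 - α * m) ^ 2 * ‖d‖ ^ 2 ≤ ρ ^ 2 * ‖d‖ ^ 2 :=
          mul_le_mul_of_nonneg_right habs (sq_nonneg _)
        rw [hexp]
        calc ‖d‖ ^ 2 - 2 * α * (inner ℝ e d : ℝ) + α ^ 2 * ‖e‖ ^ 2
            ≤ ρ ^ 2 * ‖d‖ ^ 2 := by linarith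
          _ = (ρ * ‖d‖) ^ 2 := by ring
      · -- bound by (1 - αL)²
        have hlp2 : ‖e‖ ^ 2 ≤ L ^ 2 * ‖d‖ ^ 2 := by
          nlinarith [hlp, norm_nonneg e, norm_nonneg d, mul_nonneg hL.le (norm_nonneg d)]
        have P2 : 0 ≤ (α * (α * (m + L) - 2)) * (L ^ 2 * ‖d‖ ^ 2 - ‖e‖ ^ 2) :=
          mul_nonneg (mul_nonneg hα.le (by linarith)) (by linarith)
        have key : (m + L) * ((1 - α * L) ^ 2 * ‖d‖ ^ 2
              - (‖d‖ ^ 2 - 2 * α * (inner ℝ e d : ℝ) + α ^ 2 * ‖e‖ ^ 2))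
            = 2 * (α * ((m + L) * (inner ℝ e d : ℝ) - (‖e‖ ^ 2 + m * L * ‖d‖ ^ 2)))
              + (α * (α * (m + L) - 2)) * (L ^ 2 * ‖d‖ ^ 2 - ‖e‖ ^ 2) := by
          ring
        have h3 : 0 ≤ (m + L) * ((1 - α * L) ^ 2 * ‖d‖ ^ 2
            - (‖d‖ ^ 2 - 2 * α * (inner ℝ e d : ℝ) + α ^ 2 * ‖e‖ ^ 2)) := by
          rw [key]; linarith
        have h4 := nonneg_of_mul_nonneg_right h3 hsum
        have habs : (1 - α * L) ^ 2 ≤ ρ ^ 2 := by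
          rw [← sq_abs (1 - α * L)]
          exact pow_le_pow_left₀ (abs_nonneg _) (le_max_right _ _) 2
        have h5 : (1 - α * L) ^ 2 * ‖d‖ ^ 2 ≤ ρ ^ 2 * ‖d‖ ^ 2 :=
          mul_le_mul_of_nonneg_right habs (sq_nonneg _)
        rw [hexp]
        calc ‖d‖ ^ 2 - 2 * α * (inner ℝ e d : ℝ) + α ^ 2 * ‖e‖ ^ 2
            ≤ ρ ^ 2 * ‖d‖ ^ 2 := by linarith
          _ = (ρ * ‖d‖) ^ 2 := by ring
    nlinarith [hsq, norm_nonneg (d - α • e), mul_nonneg hρ0 (norm_nonneg d)]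
  -- nonexpansiveness
  have hP := nonexp' X P hPmem hPchar (x - α • g x) (xstar - α • g xstar)
  have hdiff : (x - α • g x) - (xstar - α • g xstar) = d - α • e := by
    simp only [hd, he, smul_sub]; abel
  rw [hdiff] at hP
  calc ‖P (x - α • g x) - xstar‖ = ‖P (x - α • g x) - P (xstar - α • g xstar)‖ := by
        rw [← hfix]
    _ ≤ ‖d - α • e‖ := hP
    _ ≤ ρ * ‖d‖ := hcontr

end Aux

/-- Contraction of the projected gradient map. -/
theorem stmt_1 (n : ℕ) (f : Eucl n → ℝ) (g : Eucl n → Eucl n)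
    (X : Set (Eucl n)) (P : Eucl n → Eucl n) (xstar : Eucl n) (m L α : ℝ)
    (hm : 0 < m) (hmL : m ≤ L)
    (hX : X.Nonempty) (hXc : IsClosed X) (hXconv : Convex ℝ X)
    (hgrad : ∀ x, HasGradientAt f (g x) x)
    -- m-strong convexity
    (hstrong : ∀ x y, m * ‖x - y‖ ^ 2 ≤ (inner ℝ (g x - g y) (x - y) : ℝ))
    -- L-Lipschitz gradient
    (hlip : ∀ x y, ‖g x - g y‖ ≤ L * ‖x - y‖)
    (hα : 0 < α) (hα2 : α < 2 / L)
    -- P is the Euclidean projection onto X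
    (hPmem : ∀ x, P x ∈ X)
    (hPchar : ∀ x, ∀ y ∈ X, (inner ℝ (x - P x) (y - P x) : ℝ) ≤ 0)
    -- x* is the minimizer of f over X, a fixed point of the projected gradient map
    (hmin : xstar ∈ X) (hminOn : IsMinOn f X xstar)
    (hfix : xstar = P (xstar - α • g xstar)) :
    max |1 - α * m| |1 - α * L| < 1 ∧
      ∀ x ∈ X, ‖P (x - α • g x) - xstar‖ ≤ max |1 - α * m| |1 - α * L| * ‖x - xstar‖ :=
  pg_aux n f g X P xstar m L α hm hmL hX hXc hXconv hgrad hstrong hlip hα hα2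
    hPmem hPchar hmin hminOn hfix
end

section
/- Let nonnegative reals e_k satisfy e_{k+1} ≤ a e_k² + b e_k + c with a > 0, 0 ≤ b < τ < 1, c ≥ 0. If e₀ ≤ (τ − b)/a, then for all k: e_k ≤ max{e₀, c/(1 − τ)} whenever c/(1−τ) ≤ (τ−b)/a; moreover under these conditions e_{k+1} ≤ τ e_k + c for all k and hence limsup_{k→∞} e_k ≤ c/(1 − τ). -/
/-- Quadratic recursion: attraction region and asymptotic error. -/
theorem stmt_4 (e : ℕ → ℝ) (a b c τ : ℝ)
    (ha : 0 < a) (hb0 : 0 ≤ b) (hbτ : b < τ) (hτ1 : τ < 1) (hc : 0 ≤ c)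
    (hpos : ∀ k, 0 ≤ e k)
    (hrec : ∀ k, e (k + 1) ≤ a * e k ^ 2 + b * e k + c)
    (he0 : e 0 ≤ (τ - b) / a)
    (hattr : c / (1 - τ) ≤ (τ - b) / a) :
    (∀ k, e k ≤ max (e 0) (c / (1 - τ))) ∧
      (∀ k, e (k + 1) ≤ τ * e k + c) ∧
      Filter.limsup e Filter.atTop ≤ c / (1 - τ) := by
  have h1τ : 0 < 1 - τ := by linarith
  set L := c / (1 - τ) with hL
  have hcL : c = (1 - τ) * L := by rw [hL, mul_div_assoc']; exact (mul_div_cancel_left₀ c h1τ.ne').symm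
  have hτ0 : 0 ≤ τ := le_trans hb0 hbτ.le
  set M := max (e 0) L with hM
  have hLM : L ≤ M := le_max_right _ _
  have hMbd : M ≤ (τ - b) / a := max_le he0 hattr
  have hcM : c ≤ (1 - τ) * M := by nlinarith
  have key : ∀ k, e k ≤ M := by
    intro k
    induction k with
    | zero => exact le_max_left _ _
    | succ k ih =>
      have hek : 0 ≤ e k := hpos k
      have h1 : a * e k ≤ τ - b := by
        have h2 : e k * a ≤ τ - b := (le_div_iff₀ ha).mp (le_trans ih hMbd)
        linarith [mul_comm a (e k)]
      calc e (k+1) ≤ a * e k ^ 2 + b * e k + c := hrec k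
        _ ≤ (τ - b) * e k + b * e k + c := by nlinarith
        _ = τ * e k + c := by ring
        _ ≤ τ * M + c := by nlinarith
        _ ≤ M := by nlinarith
  have step : ∀ k, e (k + 1) ≤ τ * e k + c := by
    intro k
    have hek : 0 ≤ e k := hpos k
    have h1 : a * e k ≤ τ - b := by
      have h2 : e k * a ≤ τ - b := (le_div_iff₀ ha).mp (le_trans (key k) hMbd)
      linarith [mul_comm a (e k)]
    calc e (k+1) ≤ a * e k ^ 2 + b * e k + c := hrec k
      _ ≤ (τ - b) * e k + b * e k + c := by nlinarith
      _ = τ * e k + c := by ring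
  refine ⟨key, step, ?_⟩
  have hML : 0 ≤ M - L := by linarith
  have bnd : ∀ k, e k ≤ L + τ ^ k * (M - L) := by
    intro k
    induction k with
    | zero => simpa using key 0
    | succ k ih =>
      have h3 : e (k+1) ≤ τ * e k + c := step k
      calc e (k+1) ≤ τ * e k + c := h3
        _ ≤ τ * (L + τ ^ k * (M - L)) + c := by nlinarith
        _ = L + τ ^ (k+1) * (M - L) := by rw [hcL]; ring
  have hg : Filter.Tendsto (fun k => L + τ ^ k * (M - L)) Filter.atTop (nhds L) := by
    have h0 : Filter.Tendsto (fun k : ℕ => τ ^ k) Filter.atTop (nhds 0) :=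
      tendsto_pow_atTop_nhds_zero_of_lt_one hτ0 hτ1
    have := (h0.mul_const (M - L)).const_add L
    simpa using this
  have h1 : Filter.IsCoboundedUnder (· ≤ ·) Filter.atTop e :=
    Filter.IsBoundedUnder.isCoboundedUnder_le (Filter.isBoundedUnder_of ⟨0, fun k => hpos k⟩)
  have h2 : Filter.IsBoundedUnder (· ≤ ·) Filter.atTop (fun k => L + τ ^ k * (M - L)) :=
    hg.isBoundedUnder_le
  have hle := Filter.limsup_le_limsup (Filter.Eventually.of_forall bnd) h1 h2
  rwa [hg.limsup_eq] at hle
end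

section
/- Under Assumption 1 (m-strong convexity, L-bounded Hessian, ‖∇_{tx}f‖ ≤ C₀), the optimal prediction x*_{k+1|k} — defined as the solution of the perturbed generalized equation ∇ₓf(x*(t_k);t_k) + ∇²ₓₓf(x*(t_k);t_k)(x − x*(t_k)) + h∇_{tx}f(x*(t_k);t_k) + N_X(x) ∋ 0 — satisfies ‖x*_{k+1|k} − x*(t_{k+1})‖ ≤ 2h(C₀/m)(1 + L/m). -/
/-- Membership in the normal cone to a closed convex set `X` at `x`. -/
def InNormalCone {n : ℕ} (X : Set (Eucl n)) (x v : Eucl n) : Prop :=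
  x ∈ X ∧ ∀ y ∈ X, (inner ℝ v (y - x) : ℝ) ≤ 0

/-- Variational inequality from constrained minimality. -/
lemma vi_aux {n : ℕ} (X : Set (Eucl n)) (hXconv : Convex ℝ X) (f : Eucl n → ℝ)
    (g x₀ : Eucl n) (hx₀ : x₀ ∈ X) (hmin : IsMinOn f X x₀)
    (hg : HasGradientAt f g x₀) : ∀ y ∈ X, 0 ≤ (inner ℝ g (y - x₀) : ℝ) := by
  intro y hy
  have hseg : segment ℝ x₀ y ⊆ X := hXconv.segment_subset hx₀ hy
  have hcone : y - x₀ ∈ posTangentConeAt X x₀ :=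
    sub_mem_posTangentConeAt_of_segment_subset hseg
  have hfd : HasFDerivWithinAt f ((InnerProductSpace.toDual ℝ (Eucl n)) g) X x₀ :=
    hg.hasFDerivAt.hasFDerivWithinAt
  have := hmin.localize.hasFDerivWithinAt_nonneg hfd hcone
  rw [← InnerProductSpace.toDual_apply_apply]; exact this

set_option maxHeartbeats 1000000 in
/-- Optimal prediction error bound `O(h)` under Assumption 1 (Proposition 1,
Case a). -/
theorem stmt_8 (n : ℕ) (f : Eucl n → ℝ → ℝ)
    (G : Eucl n → ℝ → Eucl n)                        -- ∇ₓ f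
    (H : Eucl n → ℝ → (Eucl n →L[ℝ] Eucl n))         -- ∇²ₓₓ f
    (c : Eucl n → ℝ → Eucl n)                        -- ∇ₜₓ f
    (X : Set (Eucl n)) (m L C₀ : ℝ) (tk h : ℝ)
    (xstar : ℝ → Eucl n) (xpred : Eucl n)
    (hm : 0 < m) (hmL : m ≤ L) (hC₀ : 0 ≤ C₀) (hh : 0 < h)
    (hX : X.Nonempty) (hXc : IsClosed X) (hXconv : Convex ℝ X)
    (hgrad : ∀ x t, HasGradientAt (fun y => f y t) (G x t) x)
    (hHess : ∀ x t, HasFDerivAt (fun y => G y t) (H x t) x)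
    (hct : ∀ x t, HasDerivAt (fun s => G x s) (c x t) t)
    -- Assumption 1
    (hstrong : ∀ t x y, m * ‖x - y‖ ^ 2 ≤ (inner ℝ (G x t - G y t) (x - y) : ℝ))
    (hHlow : ∀ x t v, m * ‖v‖ ^ 2 ≤ (inner ℝ v (H x t v) : ℝ))
    (hHnorm : ∀ x t, ‖H x t‖ ≤ L)
    (hlip : ∀ t x y, ‖G x t - G y t‖ ≤ L * ‖x - y‖)
    (hcbound : ∀ x t, ‖c x t‖ ≤ C₀)
    (htime : ∀ x t s, ‖G x t - G x s‖ ≤ C₀ * |t - s|)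
    -- x*(t) is the minimizer of f(·;t) over X
    (hmin : ∀ t, xstar t ∈ X ∧ IsMinOn (fun x => f x t) X (xstar t))
    -- xpred solves the linearized generalized equation at (x*(t_k), t_k)
    (hpred : InNormalCone X xpred
      (-(G (xstar tk) tk + H (xstar tk) tk (xpred - xstar tk) + h • c (xstar tk) tk))) :
    ‖xpred - xstar (tk + h)‖ ≤ 2 * h * (C₀ / m) * (1 + L / m) := by
  have hL0 : 0 ≤ L := le_trans hm.le hmL
  set t1 := tk + h with ht1
  set x0 := xstar tk with hx0
  set x1 := xstar t1 with hx1
  obtain ⟨hx0X, hmin0⟩ := hmin tk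
  obtain ⟨hx1X, hmin1⟩ := hmin t1
  have vi0 : ∀ y ∈ X, 0 ≤ (inner ℝ (G x0 tk) (y - x0) : ℝ) :=
    vi_aux X hXconv _ _ _ hx0X hmin0 (hgrad x0 tk)
  have vi1 : ∀ y ∈ X, 0 ≤ (inner ℝ (G x1 t1) (y - x1) : ℝ) :=
    vi_aux X hXconv _ _ _ hx1X hmin1 (hgrad x1 t1)
  have habs : |tk - t1| = h := by
    rw [ht1, abs_of_nonpos] <;> [ring; linarith]
  -- Step 1: tracking bound ‖x1 - x0‖ ≤ C₀ h / m
  have hnd0 : ‖x1 - x0‖ ≤ C₀ * h / m := by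
    have h1 := vi1 x0 hx0X
    have h2 := vi0 x1 hx1X
    have h3 := hstrong t1 x1 x0
    have h4 : (inner ℝ (G x0 tk - G x0 t1) (x1 - x0) : ℝ) ≤ C₀ * h * ‖x1 - x0‖ := by
      calc (inner ℝ (G x0 tk - G x0 t1) (x1 - x0) : ℝ)
          ≤ ‖G x0 tk - G x0 t1‖ * ‖x1 - x0‖ := real_inner_le_norm _ _
        _ ≤ (C₀ * |tk - t1|) * ‖x1 - x0‖ :=
            mul_le_mul_of_nonneg_right (htime x0 tk t1) (norm_nonneg _)
        _ = C₀ * h * ‖x1 - x0‖ := by rw [habs]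
    have expand : (inner ℝ (G x1 t1 - G x0 t1) (x1 - x0) : ℝ)
        = -(inner ℝ (G x1 t1) (x0 - x1) : ℝ) + (inner ℝ (G x0 tk - G x0 t1) (x1 - x0) : ℝ)
          - (inner ℝ (G x0 tk) (x1 - x0) : ℝ) := by
      simp only [inner_sub_left, inner_sub_right]
      ring
    rw [expand] at h3
    have key : m * ‖x1 - x0‖ ^ 2 ≤ C₀ * h * ‖x1 - x0‖ := by linarith
    rw [le_div_iff₀ hm]
    nlinarith [norm_nonneg (x1 - x0), mul_nonneg hC₀ hh.le]
  -- Step 2: bound on prediction error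
  obtain ⟨hpX, hpVI⟩ := hpred
  set H0 := H x0 tk with hH0
  set c0 := c x0 tk with hc0
  set F := G x0 tk + H0 (xpred - x0) + h • c0 with hF
  set d := xpred - x1 with hd
  set E := G x0 tk + H0 (x1 - x0) + h • c0 - G x1 t1 with hE
  have viP : ∀ y ∈ X, 0 ≤ (inner ℝ F (y - xpred) : ℝ) := by
    intro y hy
    have := hpVI y hy
    rw [inner_neg_left] at this
    linarith
  have h5 := viP x1 hx1X
  have h6 := vi1 xpred hpX
  have hlow := hHlow x0 tk d
  have hmap : H0 d = H0 (xpred - x0) - H0 (x1 - x0) := by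
    rw [← map_sub]; congr 1; rw [hd]; abel
  have eq1 : (inner ℝ d (H0 d) : ℝ)
      = -(inner ℝ F (x1 - xpred) : ℝ) - (inner ℝ (G x1 t1) (xpred - x1) : ℝ)
        - (inner ℝ E d : ℝ) := by
    have hsymm : (inner ℝ d (H0 d) : ℝ) = inner ℝ (H0 d) d := real_inner_comm _ _
    rw [hsymm, hmap, hF, hE, hd]
    simp only [inner_sub_left, inner_add_left, inner_sub_right]
    ring
  have h7 : -(inner ℝ E d : ℝ) ≤ ‖E‖ * ‖d‖ :=
    (neg_le_abs _).trans (abs_real_inner_le_norm _ _)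
  have keyB : m * ‖d‖ ^ 2 ≤ ‖E‖ * ‖d‖ := by
    rw [eq1] at hlow; linarith
  -- bound ‖E‖
  have e1 : ‖G x0 tk - G x0 t1‖ ≤ C₀ * h := by
    have := htime x0 tk t1; rwa [habs] at this
  have e2 : ‖h • c0‖ ≤ C₀ * h := by
    rw [norm_smul, Real.norm_eq_abs, abs_of_pos hh]
    nlinarith [hcbound x0 tk, hh.le]
  have e3 : ‖G x0 t1 - G x1 t1‖ ≤ L * (C₀ * h / m) := by
    calc ‖G x0 t1 - G x1 t1‖ ≤ L * ‖x0 - x1‖ := hlip t1 x0 x1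
      _ = L * ‖x1 - x0‖ := by rw [norm_sub_rev]
      _ ≤ L * (C₀ * h / m) := mul_le_mul_of_nonneg_left hnd0 hL0
  have e4 : ‖H0 (x1 - x0)‖ ≤ L * (C₀ * h / m) := by
    calc ‖H0 (x1 - x0)‖ ≤ ‖H0‖ * ‖x1 - x0‖ := H0.le_opNorm _
      _ ≤ L * (C₀ * h / m) :=
        mul_le_mul (hHnorm x0 tk) hnd0 (norm_nonneg _) hL0
  have hEnorm : ‖E‖ ≤ 2 * C₀ * h + 2 * (L * (C₀ * h / m)) := by
    have hEeq : E = (G x0 tk - G x0 t1) + h • c0 + ((G x0 t1 - G x1 t1) + H0 (x1 - x0)) := by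
      rw [hE]; abel
    rw [hEeq]
    calc ‖(G x0 tk - G x0 t1) + h • c0 + ((G x0 t1 - G x1 t1) + H0 (x1 - x0))‖
        ≤ ‖(G x0 tk - G x0 t1) + h • c0‖ + ‖(G x0 t1 - G x1 t1) + H0 (x1 - x0)‖ :=
          norm_add_le _ _
      _ ≤ (‖G x0 tk - G x0 t1‖ + ‖h • c0‖) + (‖G x0 t1 - G x1 t1‖ + ‖H0 (x1 - x0)‖) :=
          add_le_add (norm_add_le _ _) (norm_add_le _ _)
      _ ≤ 2 * C₀ * h + 2 * (L * (C₀ * h / m)) := by linarith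
  have hK0 : 0 ≤ 2 * C₀ * h + 2 * (L * (C₀ * h / m)) := by
    have : 0 ≤ C₀ * h / m := div_nonneg (mul_nonneg hC₀ hh.le) hm.le
    nlinarith
  have keyC : m * ‖d‖ ^ 2 ≤ (2 * C₀ * h + 2 * (L * (C₀ * h / m))) * ‖d‖ :=
    keyB.trans (mul_le_mul_of_nonneg_right hEnorm (norm_nonneg _))
  have goal_eq : 2 * h * (C₀ / m) * (1 + L / m)
      = (2 * C₀ * h + 2 * (L * (C₀ * h / m))) / m := by
    field_simp
  show ‖d‖ ≤ _
  rw [goal_eq, le_div_iff₀ hm]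
  nlinarith [norm_nonneg d]
end

section
/- Under Assumptions 1 and 2 (additionally ‖∇_{xxx}f‖ ≤ C₁, ‖∇_{txx}f‖ ≤ C₂, ‖∇_{ttx}f‖ ≤ C₃), the optimal prediction error satisfies the O(h²) bound ‖x*_{k+1|k} − x*(t_{k+1})‖ ≤ (h²/2)[C₀²C₁/m³ + 2C₀C₂/m² + C₃/m]. -/
/-- Taylor-remainder style bound: if `g 0 = 0` and `‖g' s‖ ≤ K s` on `[0, b]`,
then `‖g b‖ ≤ K b² / 2`. -/
lemma norm_le_of_deriv_le_linear {E : Type*} [NormedAddCommGroup E] [NormedSpace ℝ E]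
    (g g' : ℝ → E) (K b : ℝ) (hb : 0 ≤ b)
    (hd : ∀ s, HasDerivAt g (g' s) s)
    (hbound : ∀ s ∈ Set.Ico (0:ℝ) b, ‖g' s‖ ≤ K * s)
    (h0 : g 0 = 0) :
    ‖g b‖ ≤ K * b ^ 2 / 2 := by
  have hB : ∀ x : ℝ, HasDerivAt (fun s => K * s ^ 2 / 2) (K * x) x := by
    intro x
    have h1 : HasDerivAt (fun s : ℝ => s ^ 2) (2 * x) x := by
      simpa using hasDerivAt_pow 2 x
    have := (h1.const_mul K).div_const 2
    rw [show K * x = K * (2 * x) / 2 by ring]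
    exact this
  have key := image_norm_le_of_norm_deriv_right_le_deriv_boundary
    (f := g) (f' := g') (a := 0) (b := b)
    (fun s _ => (hd s).continuousAt.continuousWithinAt)
    (fun s _ => (hd s).hasDerivWithinAt)
    (B := fun s => K * s ^ 2 / 2) (by simp [h0]) hB hbound
  simpa using key ⟨hb, le_refl b⟩

/-- Optimal prediction error bound `O(h²)` under Assumptions 1 and 2
(Proposition 1, Case b). -/
theorem stmt_9 (n : ℕ) (f : Eucl n → ℝ → ℝ)
    (G : Eucl n → ℝ → Eucl n)                        -- ∇ₓ f
    (H : Eucl n → ℝ → (Eucl n →L[ℝ] Eucl n))         -- ∇²ₓₓ f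
    (c : Eucl n → ℝ → Eucl n)                        -- ∇ₜₓ f
    (X : Set (Eucl n)) (m L C₀ C₁ C₂ C₃ : ℝ) (tk h : ℝ)
    (xstar : ℝ → Eucl n) (xpred : Eucl n)
    (hm : 0 < m) (hmL : m ≤ L) (hC₀ : 0 ≤ C₀) (hh : 0 < h)
    (hC₁ : 0 ≤ C₁) (hC₂ : 0 ≤ C₂) (hC₃ : 0 ≤ C₃)
    (hX : X.Nonempty) (hXc : IsClosed X) (hXconv : Convex ℝ X)
    (hgrad : ∀ x t, HasGradientAt (fun y => f y t) (G x t) x)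
    (hHess : ∀ x t, HasFDerivAt (fun y => G y t) (H x t) x)
    (hct : ∀ x t, HasDerivAt (fun s => G x s) (c x t) t)
    -- Assumption 1
    (hstrong : ∀ t x y, m * ‖x - y‖ ^ 2 ≤ (inner ℝ (G x t - G y t) (x - y) : ℝ))
    (hHlow : ∀ x t v, m * ‖v‖ ^ 2 ≤ (inner ℝ v (H x t v) : ℝ))
    (hHnorm : ∀ x t, ‖H x t‖ ≤ L)
    (hlip : ∀ t x y, ‖G x t - G y t‖ ≤ L * ‖x - y‖)
    (hcbound : ∀ x t, ‖c x t‖ ≤ C₀)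
    (htime : ∀ x t s, ‖G x t - G x s‖ ≤ C₀ * |t - s|)
    -- Assumption 2: ‖∇ₓₓₓ f‖ ≤ C₁, ‖∇ₜₓₓ f‖ ≤ C₂, ‖∇ₜₜₓ f‖ ≤ C₃
    (hHlip : ∀ x y t s, ‖H x t - H y s‖ ≤ C₁ * ‖x - y‖ + C₂ * |t - s|)
    (hclip : ∀ x y t s, ‖c x t - c y s‖ ≤ C₂ * ‖x - y‖ + C₃ * |t - s|)
    -- x*(t) is the minimizer of f(·;t) over X
    (hmin : ∀ t, xstar t ∈ X ∧ IsMinOn (fun x => f x t) X (xstar t))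
    -- xpred solves the linearized generalized equation at (x*(t_k), t_k)
    (hpred : InNormalCone X xpred
      (-(G (xstar tk) tk + H (xstar tk) tk (xpred - xstar tk) + h • c (xstar tk) tk))) :
    ‖xpred - xstar (tk + h)‖ ≤
      (h ^ 2 / 2) * (C₀ ^ 2 * C₁ / m ^ 3 + 2 * C₀ * C₂ / m ^ 2 + C₃ / m) := by

  -- variational inequality at the minimizer
  have VI : ∀ t, ∀ y ∈ X, (0:ℝ) ≤ inner ℝ (G (xstar t) t) (y - xstar t) := by
    intro t y hy
    have hmem := (hmin t).1
    have hfd : HasFDerivWithinAt (fun x => f x t)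
        (InnerProductSpace.toDual ℝ (Eucl n) (G (xstar t) t)) X (xstar t) :=
      (hgrad (xstar t) t).hasFDerivAt.hasFDerivWithinAt
    have htc : y - xstar t ∈ posTangentConeAt X (xstar t) :=
      sub_mem_posTangentConeAt_of_segment_subset (hXconv.segment_subset hmem hy)
    have := (hmin t).2.localize.hasFDerivWithinAt_nonneg hfd htc
    simpa [InnerProductSpace.toDual_apply_apply] using this
  have hmemk := (hmin tk).1
  have hmemk1 := (hmin (tk + h)).1
  set x₀ : Eucl n := xstar tk with hx₀
  set x₁ : Eucl n := xstar (tk + h) with hx₁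
  set Δ : Eucl n := x₁ - x₀ with hΔ
  set e : Eucl n := xpred - x₁ with he
  set d : ℝ := ‖Δ‖ with hd
  clear_value x₀ x₁ Δ e d
  -- Lipschitz bound on the trajectory: m * d ≤ C₀ * h
  have hlip1 : m * d ≤ C₀ * h := by
    have h1 : (0:ℝ) ≤ inner ℝ (G x₁ (tk + h)) (x₀ - x₁) := by
      rw [hx₀, hx₁]; exact VI (tk + h) (xstar tk) (hmin tk).1
    have h2 : (0:ℝ) ≤ inner ℝ (G x₀ tk) (x₁ - x₀) := by
      rw [hx₀, hx₁]; exact VI tk (xstar (tk + h)) (hmin (tk + h)).1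
    have h3 := hstrong tk x₁ x₀
    have h4 : (inner ℝ (G x₁ tk - G x₀ tk) (x₁ - x₀) : ℝ)
        = inner ℝ (G x₁ tk - G x₁ (tk + h)) (x₁ - x₀)
          - inner ℝ (G x₁ (tk + h)) (x₀ - x₁) - inner ℝ (G x₀ tk) (x₁ - x₀) := by
      rw [inner_sub_left, inner_sub_left, show x₀ - x₁ = -(x₁ - x₀) by abel, inner_neg_right]
      ring
    have h5 : (inner ℝ (G x₁ tk - G x₁ (tk + h)) (x₁ - x₀) : ℝ) ≤ C₀ * h * d := by
      calc (inner ℝ (G x₁ tk - G x₁ (tk + h)) (x₁ - x₀) : ℝ)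
          ≤ ‖G x₁ tk - G x₁ (tk + h)‖ * ‖x₁ - x₀‖ := real_inner_le_norm _ _
        _ ≤ C₀ * h * d := by
            have hG := htime x₁ tk (tk + h)
            have habs : |tk - (tk + h)| = h := by rw [abs_sub_comm]; simp [abs_of_pos hh]
            rw [habs] at hG
            have hnd : ‖x₁ - x₀‖ = d := by rw [hd, hΔ]
            rw [hnd]
            exact mul_le_mul_of_nonneg_right hG (by rw [hd]; exact norm_nonneg Δ)
    have hmd2 : m * ‖x₁ - x₀‖ ^ 2 ≤ C₀ * h * d := by
      calc m * ‖x₁ - x₀‖ ^ 2 ≤ (inner ℝ (G x₁ tk - G x₀ tk) (x₁ - x₀) : ℝ) := h3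
        _ ≤ C₀ * h * d := by rw [h4]; linarith
    have hnd : ‖x₁ - x₀‖ = d := by rw [hd, hΔ]
    rw [hnd] at hmd2
    rcases eq_or_lt_of_le (norm_nonneg Δ) with h0 | h0
    · rw [hd, ← h0, mul_zero]; exact mul_nonneg hC₀ hh.le
    · have hdpos : 0 < d := by rw [hd]; exact h0
      have h6 : m * d * d ≤ C₀ * h * d := by rw [mul_assoc, ← sq]; exact hmd2
      exact le_of_mul_le_mul_right h6 hdpos
  have hdnn : 0 ≤ d := by rw [hd]; exact norm_nonneg Δ
  -- remainder bound
  set R : Eucl n := G x₁ (tk + h) - G x₀ tk - H x₀ tk Δ - h • c x₀ tk with hR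
  clear_value R
  have hRbound : ‖R‖ ≤ C₁ * d ^ 2 / 2 + C₂ * h * d + C₃ * h ^ 2 / 2 := by
    -- time part
    have hTime : ‖G x₁ (tk + h) - G x₁ tk - h • c x₁ tk‖ ≤ C₃ * h ^ 2 / 2 := by
      have key := norm_le_of_deriv_le_linear
        (fun s => G x₁ (tk + s) - G x₁ tk - s • c x₁ tk)
        (fun s => c x₁ (tk + s) - c x₁ tk) C₃ h hh.le
        (fun s => by
          have h1 : HasDerivAt (fun s : ℝ => G x₁ (tk + s)) (c x₁ (tk + s)) s := by
            have := (hct x₁ (tk + s)).scomp s ((hasDerivAt_id' (x := s)).const_add tk)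
            rw [one_smul] at this
            exact this
          have h2 : HasDerivAt (fun s : ℝ => s • c x₁ tk) (c x₁ tk) s := by
            have := (hasDerivAt_id' (x := s)).smul_const (c x₁ tk)
            rwa [one_smul] at this
          exact (h1.sub_const (G x₁ tk)).sub h2)
        (fun s hs => by
          have := hclip x₁ x₁ (tk + s) tk
          simpa [abs_of_nonneg hs.1] using this)
        (by simp)
      simpa using key
    -- space part
    have hSpace : ‖G x₁ tk - G x₀ tk - H x₀ tk Δ‖ ≤ C₁ * d ^ 2 / 2 := by
      have key := norm_le_of_deriv_le_linear
        (fun s => G (x₀ + s • Δ) tk - G x₀ tk - s • (H x₀ tk Δ))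
        (fun s => H (x₀ + s • Δ) tk Δ - H x₀ tk Δ) (C₁ * d ^ 2) 1 zero_le_one
        (fun s => by
          have hcurve : HasDerivAt (fun s : ℝ => x₀ + s • Δ) Δ s := by
            have := ((hasDerivAt_id' (x := s)).smul_const Δ).const_add x₀
            rwa [one_smul] at this
          have h1 : HasDerivAt (fun s : ℝ => G (x₀ + s • Δ) tk) (H (x₀ + s • Δ) tk Δ) s := by
            have := (hHess (x₀ + s • Δ) tk).comp_hasDerivAt s hcurve
            exact this
          have h2 : HasDerivAt (fun s : ℝ => s • (H x₀ tk Δ)) (H x₀ tk Δ) s := by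
            have := (hasDerivAt_id' (x := s)).smul_const (H x₀ tk Δ)
            rwa [one_smul] at this
          exact (h1.sub_const (G x₀ tk)).sub h2)
        (fun s hs => by
          have hnorm : ‖H (x₀ + s • Δ) tk Δ - H x₀ tk Δ‖
              ≤ ‖H (x₀ + s • Δ) tk - H x₀ tk‖ * ‖Δ‖ := by
            have := (H (x₀ + s • Δ) tk - H x₀ tk).le_opNorm Δ
            rwa [ContinuousLinearMap.sub_apply] at this
          have hH := hHlip (x₀ + s • Δ) x₀ tk tk
          have hHn : ‖H (x₀ + s • Δ) tk - H x₀ tk‖ ≤ C₁ * (s * d) := by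
            have hs' : ‖x₀ + s • Δ - x₀‖ = s * d := by
              rw [add_sub_cancel_left, norm_smul, Real.norm_eq_abs, abs_of_nonneg hs.1, hd]
            rw [hs'] at hH
            simp only [sub_self, abs_zero, mul_zero, add_zero] at hH
            exact hH
          calc ‖H (x₀ + s • Δ) tk Δ - H x₀ tk Δ‖
              ≤ C₁ * (s * d) * ‖Δ‖ := le_trans hnorm
                (mul_le_mul_of_nonneg_right hHn (norm_nonneg _))
            _ = C₁ * d ^ 2 * s := by rw [← hd]; ring)
        (by simp)
      have h1 : x₀ + Δ = x₁ := by rw [hΔ]; abel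
      simp only [one_smul, h1, one_pow, mul_one] at key
      exact key
    -- cross part
    have hCross : ‖h • (c x₁ tk - c x₀ tk)‖ ≤ C₂ * h * d := by
      have hc := hclip x₁ x₀ tk tk
      simp only [sub_self, abs_zero, mul_zero, add_zero] at hc
      rw [norm_smul, Real.norm_eq_abs, abs_of_pos hh]
      have hnd : ‖x₁ - x₀‖ = d := by rw [hd, hΔ]
      rw [hnd] at hc
      calc h * ‖c x₁ tk - c x₀ tk‖ ≤ h * (C₂ * d) :=
            mul_le_mul_of_nonneg_left hc hh.le
        _ = C₂ * h * d := by ring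
    have hsplit : R = (G x₁ (tk + h) - G x₁ tk - h • c x₁ tk)
        + (G x₁ tk - G x₀ tk - H x₀ tk Δ) + h • (c x₁ tk - c x₀ tk) := by
      rw [hR, smul_sub]; abel
    calc ‖R‖ ≤ ‖G x₁ (tk + h) - G x₁ tk - h • c x₁ tk‖
        + ‖G x₁ tk - G x₀ tk - H x₀ tk Δ‖ + ‖h • (c x₁ tk - c x₀ tk)‖ := by
          rw [hsplit]
          exact le_trans (norm_add_le _ _) (by gcongr; exact norm_add_le _ _)
      _ ≤ C₁ * d ^ 2 / 2 + C₂ * h * d + C₃ * h ^ 2 / 2 := by linarith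
  -- key inequality: m ‖e‖ ≤ ‖R‖
  have hkey : m * ‖e‖ ≤ ‖R‖ := by
    set A : Eucl n := G x₀ tk + H x₀ tk (xpred - x₀) + h • c x₀ tk with hA
    clear_value A
    have h1 : (0:ℝ) ≤ inner ℝ A (x₁ - xpred) := by
      have := hpred.2 x₁ hmemk1
      rw [inner_neg_left] at this
      linarith
    have h2 : (0:ℝ) ≤ inner ℝ (G x₁ (tk + h)) (xpred - x₁) := by
      rw [hx₁]; exact VI (tk + h) xpred hpred.1
    have hAe : A = G x₁ (tk + h) + (H x₀ tk e - R) := by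
      have hsplit : H x₀ tk (xpred - x₀) = H x₀ tk e + H x₀ tk Δ := by
        rw [← map_add]; congr 1; rw [he, hΔ]; abel
      rw [hA, hsplit, hR]; abel
    have expand : -(inner ℝ (H x₀ tk e) e : ℝ) + inner ℝ R e
        = inner ℝ A (x₁ - xpred) + inner ℝ (G x₁ (tk + h)) (xpred - x₁) := by
      have hx1p : x₁ - xpred = -e := by rw [he]; abel
      rw [hx1p, ← he, hAe]
      simp only [inner_add_left, inner_sub_left, inner_neg_right]
      ring
    have h4 : m * ‖e‖ ^ 2 ≤ ‖R‖ * ‖e‖ := by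
      have hlow := hHlow x₀ tk e
      rw [real_inner_comm] at hlow
      have h3 : (inner ℝ (H x₀ tk e) e : ℝ) ≤ inner ℝ R e := by linarith
      have h5 : (inner ℝ R e : ℝ) ≤ ‖R‖ * ‖e‖ := real_inner_le_norm _ _
      linarith
    rcases eq_or_lt_of_le (norm_nonneg e) with h0 | h0
    · rw [← h0, mul_zero]; exact norm_nonneg R
    · have h6 : m * ‖e‖ * ‖e‖ ≤ ‖R‖ * ‖e‖ := by rw [mul_assoc, ← sq]; exact h4
      exact le_of_mul_le_mul_right h6 h0
  -- final arithmetic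
  have hRle : ‖R‖ ≤ C₁ * (C₀ * h / m) ^ 2 / 2 + C₂ * h * (C₀ * h / m) + C₃ * h ^ 2 / 2 := by
    have hdle : d ≤ C₀ * h / m := by
      rw [le_div_iff₀ hm]; linarith [hlip1]
    have h1 : C₁ * d ^ 2 ≤ C₁ * (C₀ * h / m) ^ 2 :=
      mul_le_mul_of_nonneg_left (pow_le_pow_left₀ hdnn hdle 2) hC₁
    have h2 : C₂ * h * d ≤ C₂ * h * (C₀ * h / m) :=
      mul_le_mul_of_nonneg_left hdle (by positivity)
    linarith
  have hfinal : ‖e‖ ≤ ‖R‖ / m := by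
    rw [le_div_iff₀ hm]; linarith [hkey]
  calc ‖e‖ ≤ ‖R‖ / m := hfinal
    _ ≤ (C₁ * (C₀ * h / m) ^ 2 / 2 + C₂ * h * (C₀ * h / m) + C₃ * h ^ 2 / 2) / m :=
        (div_le_div_iff_of_pos_right hm).mpr hRle
    _ = (h ^ 2 / 2) * (C₀ ^ 2 * C₁ / m ^ 3 + 2 * C₀ * C₂ / m ^ 2 + C₃ / m) := by
        have hm0 : m ≠ 0 := hm.ne'
        field_simp
end

section
/- Consider the C-FOPC recursion under Assumption 1 only: e_{k+1} ≤ ρ_C^C (η₁ e_k + η₂) where e_k = ‖x_k − x*(t_k)‖, η₁ = ρ_P^P + (ρ_P^P + 1)(2L/m), η₂ = (2ρ_P^P + 1)Δ₁ and Δ₁ = 2h(C₀/m)(1 + L/m). If τ₀ := ρ_C^C η₁ < 1, then limsup_{k→∞} e_k ≤ ρ_C^C(2ρ_P^P + 1)Δ₁ / (1 − τ₀), which is O(ρ_C^C h). -/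
open Filter

/- The affine map `x ↦ τ x + b` has fixed point `b / (1 - τ)` and contracts distances to it by
the factor `τ`. -/
theorem le_pow_mul_sub_add_div_of_le_mul_add {e : ℕ → ℝ} {τ b : ℝ} (hτ0 : 0 ≤ τ) (hτ1 : τ < 1)
    (hrec : ∀ k, e (k + 1) ≤ τ * e k + b) (k : ℕ) :
    e k ≤ τ ^ k * (e 0 - b / (1 - τ)) + b / (1 - τ) := by
  have hfix : τ * (b / (1 - τ)) + b = b / (1 - τ) := by
    field_simp [(sub_pos.2 hτ1).ne']
    ring
  induction k with
  | zero => simp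
  | succ n ih =>
    calc e (n + 1) ≤ τ * e n + b := hrec n
      _ ≤ τ * (τ ^ n * (e 0 - b / (1 - τ)) + b / (1 - τ)) + b := by gcongr
      _ = τ ^ (n + 1) * (e 0 - b / (1 - τ)) + (τ * (b / (1 - τ)) + b) := by ring
      _ = τ ^ (n + 1) * (e 0 - b / (1 - τ)) + b / (1 - τ) := by rw [hfix]

theorem limsup_le_div_of_le_mul_add {e : ℕ → ℝ} {τ b : ℝ} (hτ0 : 0 ≤ τ) (hτ1 : τ < 1)
    (he : ∀ k, 0 ≤ e k) (hrec : ∀ k, e (k + 1) ≤ τ * e k + b) :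
    limsup e atTop ≤ b / (1 - τ) := by
  have hbound : Tendsto (fun k ↦ τ ^ k * (e 0 - b / (1 - τ)) + b / (1 - τ)) atTop
      (nhds (b / (1 - τ))) := by
    simpa using ((tendsto_pow_atTop_nhds_zero_of_lt_one hτ0 hτ1).mul_const
      (e 0 - b / (1 - τ))).add_const (b / (1 - τ))
  -- without a lower bound on `e`, `limsup e atTop` in `ℝ` would be a junk value
  have hcobdd : IsCoboundedUnder (· ≤ ·) atTop e :=
    (isBoundedUnder_of ⟨0, he⟩ : IsBoundedUnder (· ≥ ·) atTop e).isCoboundedUnder_le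
  calc limsup e atTop ≤ limsup (fun k ↦ τ ^ k * (e 0 - b / (1 - τ)) + b / (1 - τ)) atTop :=
        limsup_le_limsup (.of_forall (le_pow_mul_sub_add_div_of_le_mul_add hτ0 hτ1 hrec)) hcobdd
          hbound.isBoundedUnder_le
    _ = b / (1 - τ) := hbound.limsup_eq

theorem stmt_10_general (e : ℕ → ℝ) (ρP ρC m L C₀ h : ℝ) (P C : ℕ)
    (hρP0 : 0 ≤ ρP) (hρC0 : 0 ≤ ρC)
    (hm : 0 < m) (hmL : m ≤ L)
    (hpos : ∀ k, 0 ≤ e k)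
    (hrec : ∀ k, e (k + 1) ≤
      ρC ^ C * ((ρP ^ P + (ρP ^ P + 1) * (2 * L / m)) * e k +
        (2 * ρP ^ P + 1) * (2 * h * (C₀ / m) * (1 + L / m))))
    (hτ : ρC ^ C * (ρP ^ P + (ρP ^ P + 1) * (2 * L / m)) < 1) :
    Filter.limsup e Filter.atTop ≤
      ρC ^ C * (2 * ρP ^ P + 1) * (2 * h * (C₀ / m) * (1 + L / m)) /
        (1 - ρC ^ C * (ρP ^ P + (ρP ^ P + 1) * (2 * L / m))) := by
  have hL : 0 ≤ L := hm.le.trans hmL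
  have hτ0 : 0 ≤ ρC ^ C * (ρP ^ P + (ρP ^ P + 1) * (2 * L / m)) := by positivity
  rw [mul_assoc (ρC ^ C)]
  exact limsup_le_div_of_le_mul_add hτ0 hτ hpos fun k ↦ (hrec k).trans_eq (by ring)

/-- Global `O(ρ_C^C h)` convergence of C-FOPC under Assumption 1
(Theorem 1). -/
theorem stmt_10 (e : ℕ → ℝ) (ρP ρC m L C₀ h : ℝ) (P C : ℕ)
    (hρP0 : 0 ≤ ρP) (hρP1 : ρP < 1) (hρC0 : 0 ≤ ρC) (hρC1 : ρC < 1)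
    (hm : 0 < m) (hmL : m ≤ L) (hC₀ : 0 < C₀) (hh : 0 < h)
    (hpos : ∀ k, 0 ≤ e k)
    (hrec : ∀ k, e (k + 1) ≤
      ρC ^ C * ((ρP ^ P + (ρP ^ P + 1) * (2 * L / m)) * e k +
        (2 * ρP ^ P + 1) * (2 * h * (C₀ / m) * (1 + L / m))))
    (hτ : ρC ^ C * (ρP ^ P + (ρP ^ P + 1) * (2 * L / m)) < 1) :
    Filter.limsup e Filter.atTop ≤
      ρC ^ C * (2 * ρP ^ P + 1) * (2 * h * (C₀ / m) * (1 + L / m)) /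
        (1 - ρC ^ C * (ρP ^ P + (ρP ^ P + 1) * (2 * L / m))) :=
  stmt_10_general e ρP ρC m L C₀ h P C hρP0 hρC0 hm hmL hpos hrec hτ
end

section
/- Let e_k ≥ 0 satisfy e_{k+1} ≤ η̄₀ e_k² + η̄₁ e_k + η̄₂ with η̄₀ = ρ_C^C(ρ_P^P+1)C₁/(2m), η̄₁ = ρ_C^C[ρ_P^P + h(ρ_P^P+1)(C₁C₀/m² + C₂/m)], η̄₂ ≥ 0. Suppose ρ_P^P ρ_C^C < τ < 1 and h ≤ h̄ := [(τ − ρ_C^C ρ_P^P)/(ρ_C^C(ρ_P^P+1))]·(C₁C₀/m² + C₂/m)⁻¹, and e₀ ≤ (τ − η̄₁)/η̄₀. Then, provided η̄₂/(1−τ) ≤ (τ − η̄₁)/η̄₀, we have e_k ≤ τᵏ e₀ + η̄₂(1−τᵏ)/(1−τ) for all k, hence limsup e_k ≤ η̄₂/(1−τ). -/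
/-!
Write `A = η̄₀`, `B = η̄₁` and `R = (τ - B) / A`. On `[0, R]` the quadratic term is dominated by
the linear one, `A x² + B x ≤ (A R + B) x = τ x`, so as long as `e k ≤ R` the recursion is the
contraction `e (k+1) ≤ τ e k + η̄₂`. Since `η̄₂ ≤ (1 - τ) R`, this contraction maps `[0, R]` into
itself, so by induction the sequence never leaves the attraction region and the linear bound
holds at every step; unrolling it gives the geometric estimate, whose limit is `η̄₂ / (1 - τ)`.
-/

open Filter Topology

section QuadraticRecursion

variable {e : ℕ → ℝ} {A B c τ : ℝ}

/-- For `A = 0` the bound reads `x ≤ 0` (division by zero is `0`), so then `x = 0`. -/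
lemma quadratic_le_mul_of_le_div {x : ℝ} (hA : 0 ≤ A) (hx0 : 0 ≤ x) (hx : x ≤ (τ - B) / A) :
    A * x ^ 2 + B * x ≤ τ * x := by
  rcases hA.eq_or_lt with rfl | hA
  · obtain rfl : x = 0 := le_antisymm (by simpa using hx) hx0
    simp
  · have hAx : A * x ≤ τ - B := (le_div_iff₀' hA).mp hx
    nlinarith [mul_le_mul_of_nonneg_right hAx hx0]

lemma le_geometric_of_le_mul_add (hτ0 : 0 ≤ τ) (hτ1 : τ ≠ 1)
    (hstep : ∀ k, e (k + 1) ≤ τ * e k + c) (k : ℕ) :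
    e k ≤ τ ^ k * e 0 + c * (1 - τ ^ k) / (1 - τ) := by
  have h1τ : 1 - τ ≠ 0 := sub_ne_zero.mpr hτ1.symm
  induction k with
  | zero => simp
  | succ k ih =>
    calc e (k + 1) ≤ τ * e k + c := hstep k
      _ ≤ τ * (τ ^ k * e 0 + c * (1 - τ ^ k) / (1 - τ)) + c := by gcongr
      _ = τ ^ (k + 1) * e 0 + c * (1 - τ ^ (k + 1)) / (1 - τ) := by
        field_simp
        ring

section AttractionRegion

variable (hpos : ∀ k, 0 ≤ e k) (hrec : ∀ k, e (k + 1) ≤ A * e k ^ 2 + B * e k + c)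
  (hA : 0 ≤ A) (hτ0 : 0 ≤ τ) (hτ1 : τ < 1)
  (he0 : e 0 ≤ (τ - B) / A) (hc : c / (1 - τ) ≤ (τ - B) / A)
include hpos hrec hA hτ0 hτ1 he0 hc

lemma le_attractionRadius_of_quadratic_recursion (k : ℕ) : e k ≤ (τ - B) / A := by
  have hcR : c ≤ (τ - B) / A * (1 - τ) := (div_le_iff₀ (sub_pos.mpr hτ1)).mp hc
  induction k with
  | zero => exact he0
  | succ k ih =>
    have hlin : A * e k ^ 2 + B * e k ≤ τ * e k := quadratic_le_mul_of_le_div hA (hpos k) ih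
    nlinarith [hrec k, mul_le_mul_of_nonneg_left ih hτ0]

lemma le_mul_add_of_quadratic_recursion (k : ℕ) : e (k + 1) ≤ τ * e k + c := by
  have hlin : A * e k ^ 2 + B * e k ≤ τ * e k :=
    quadratic_le_mul_of_le_div hA (hpos k)
      (le_attractionRadius_of_quadratic_recursion hpos hrec hA hτ0 hτ1 he0 hc k)
  linarith [hrec k]

end AttractionRegion

lemma tendsto_geometric_bound (a : ℝ) (hτ0 : 0 ≤ τ) (hτ1 : τ < 1) :
    Tendsto (fun k : ℕ => τ ^ k * a + c * (1 - τ ^ k) / (1 - τ)) atTop (𝓝 (c / (1 - τ))) := by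
  have hτk : Tendsto (fun k : ℕ => τ ^ k) atTop (𝓝 0) :=
    tendsto_pow_atTop_nhds_zero_of_lt_one hτ0 hτ1
  simpa using (hτk.mul_const a).add ((((tendsto_const_nhds (x := (1 : ℝ))).sub hτk).const_mul c).div_const (1 - τ))

lemma limsup_le_of_le_geometric (hτ0 : 0 ≤ τ) (hτ1 : τ < 1) (hpos : ∀ k, 0 ≤ e k)
    (hbound : ∀ k, e k ≤ τ ^ k * e 0 + c * (1 - τ ^ k) / (1 - τ)) :
    limsup e atTop ≤ c / (1 - τ) := by
  have hlim := tendsto_geometric_bound (c := c) (e 0) hτ0 hτ1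
  calc limsup e atTop
      ≤ limsup (fun k : ℕ => τ ^ k * e 0 + c * (1 - τ ^ k) / (1 - τ)) atTop :=
        limsup_le_limsup (Eventually.of_forall hbound)
          (isCoboundedUnder_le_of_le _ hpos) hlim.isBoundedUnder_le
    _ = c / (1 - τ) := hlim.limsup_eq

end QuadraticRecursion

theorem stmt_11_general (e : ℕ → ℝ) (ρP ρC m C₀ C₁ C₂ h τ η₂ : ℝ) (P C : ℕ)
    (hρP0 : 0 ≤ ρP) (hρC0 : 0 ≤ ρC)
    (hm : 0 < m) (hC₁ : 0 < C₁)
    (hτ0 : 0 < τ) (hτ1 : τ < 1)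
    (hpos : ∀ k, 0 ≤ e k)
    (hrec : ∀ k, e (k + 1) ≤
      (ρC ^ C * (ρP ^ P + 1) * C₁ / (2 * m)) * e k ^ 2 +
        (ρC ^ C * (ρP ^ P + h * (ρP ^ P + 1) * (C₁ * C₀ / m ^ 2 + C₂ / m))) * e k + η₂)
    (he0 : e 0 ≤ (τ - ρC ^ C * (ρP ^ P + h * (ρP ^ P + 1) * (C₁ * C₀ / m ^ 2 + C₂ / m))) /
      (ρC ^ C * (ρP ^ P + 1) * C₁ / (2 * m)))
    (hattr : η₂ / (1 - τ) ≤
      (τ - ρC ^ C * (ρP ^ P + h * (ρP ^ P + 1) * (C₁ * C₀ / m ^ 2 + C₂ / m))) /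
        (ρC ^ C * (ρP ^ P + 1) * C₁ / (2 * m))) :
    (∀ k, e k ≤ τ ^ k * e 0 + η₂ * (1 - τ ^ k) / (1 - τ)) ∧
      Filter.limsup e Filter.atTop ≤ η₂ / (1 - τ) := by
  have hη₀ : 0 ≤ ρC ^ C * (ρP ^ P + 1) * C₁ / (2 * m) := by positivity
  have hstep := le_mul_add_of_quadratic_recursion hpos hrec hη₀ hτ0.le hτ1 he0 hattr
  have hbound := le_geometric_of_le_mul_add hτ0.le hτ1.ne hstep
  exact ⟨hbound, limsup_le_of_le_geometric hτ0.le hτ1 hpos hbound⟩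

/-- Local `O(h²)` convergence of C-FOPC under Assumptions 1–2 (Theorem 2):
quadratic error recursion with attraction region. -/
theorem stmt_11 (e : ℕ → ℝ) (ρP ρC m L C₀ C₁ C₂ h τ η₂ : ℝ) (P C : ℕ)
    (hρP0 : 0 ≤ ρP) (hρP1 : ρP < 1) (hρC0 : 0 ≤ ρC) (hρC1 : ρC < 1)
    (hm : 0 < m) (hmL : m ≤ L) (hC₀ : 0 < C₀) (hC₁ : 0 < C₁) (hC₂ : 0 < C₂)
    (hh : 0 < h) (hτ0 : 0 < τ) (hτ1 : τ < 1) (hη₂ : 0 ≤ η₂)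
    (hpos : ∀ k, 0 ≤ e k)
    (hrec : ∀ k, e (k + 1) ≤
      (ρC ^ C * (ρP ^ P + 1) * C₁ / (2 * m)) * e k ^ 2 +
        (ρC ^ C * (ρP ^ P + h * (ρP ^ P + 1) * (C₁ * C₀ / m ^ 2 + C₂ / m))) * e k + η₂)
    (hτP : ρP ^ P * ρC ^ C < τ)
    (hhbar : h ≤ ((τ - ρC ^ C * ρP ^ P) / (ρC ^ C * (ρP ^ P + 1))) *
      (C₁ * C₀ / m ^ 2 + C₂ / m)⁻¹)
    (he0 : e 0 ≤ (τ - ρC ^ C * (ρP ^ P + h * (ρP ^ P + 1) * (C₁ * C₀ / m ^ 2 + C₂ / m))) /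
      (ρC ^ C * (ρP ^ P + 1) * C₁ / (2 * m)))
    (hattr : η₂ / (1 - τ) ≤
      (τ - ρC ^ C * (ρP ^ P + h * (ρP ^ P + 1) * (C₁ * C₀ / m ^ 2 + C₂ / m))) /
        (ρC ^ C * (ρP ^ P + 1) * C₁ / (2 * m))) :
    (∀ k, e k ≤ τ ^ k * e 0 + η₂ * (1 - τ ^ k) / (1 - τ)) ∧
      Filter.limsup e Filter.atTop ≤ η₂ / (1 - τ) :=
  stmt_11_general e ρP ρC m C₀ C₁ C₂ h τ η₂ P C hρP0 hρC0 hm hC₁ hτ0 hτ1 hpos hrec he0 hattr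
end

section
/- Let f : ℝⁿ × ℝ → ℝ satisfy Assumption 1 (mI ⪯ ∇²ₓₓf ⪯ LI, ‖∇_{tx}f‖ ≤ C₀) and let x*(t) be the minimizer of f(·;t) over closed convex X. Then for any x_k ∈ X and sampling period h, the residual g(x₁) = ∇ₓf(x_k;t_k) + ∇²ₓₓf(x_k;t_k)(x₁ − x_k) + h∇_{tx}f(x_k;t_k) − ∇ₓf(x₁;t_{k+1}), where x₁ = x*(t_{k+1}), satisfies ‖g(x₁)‖ ≤ 2L‖x_k − x*(t_k)‖ + 2hC₀(1 + L/m). -/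
/-- Variational inequality from a minimum over a segment. -/
lemma var_ineq {n : ℕ} (F : Eucl n → ℝ) (g a y : Eucl n)
    (hg : HasGradientAt F g a)
    (hle : ∀ s ∈ Set.Icc (0:ℝ) 1, F a ≤ F (a + s • (y - a))) :
    0 ≤ (inner ℝ g (y - a) : ℝ) := by
  set φ : ℝ → ℝ := fun s => F (a + s • (y - a)) with hφ
  have h1 : HasDerivAt (fun s : ℝ => a + s • (y - a)) (y - a) 0 := by
    simpa using ((hasDerivAt_id (0:ℝ)).smul_const (y - a)).const_add a
  have hF := hg.hasFDerivAt
  rw [show a = a + (0:ℝ) • (y - a) by simp] at hF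
  have hd : HasDerivAt φ (inner ℝ g (y - a) : ℝ) 0 := by
    have := hF.comp_hasDerivAt 0 h1
    exact this
  have hslope := hasDerivAt_iff_tendsto_slope.1 hd
  have hslope' : Filter.Tendsto (slope φ 0) (nhdsWithin 0 (Set.Ioi 0))
      (nhds (inner ℝ g (y - a) : ℝ)) :=
    hslope.mono_left (nhdsWithin_mono 0 (fun s hs => ne_of_gt hs))
  refine ge_of_tendsto hslope' ?_
  filter_upwards [Ioo_mem_nhdsGT_of_mem (Set.left_mem_Ico.2 one_pos)] with s hs
  have hs0 : 0 < s := hs.1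
  have hφ0 : φ 0 = F a := by simp [φ]
  have hmono : F a ≤ φ s := hle s ⟨le_of_lt hs0, le_of_lt hs.2⟩
  rw [slope_def_field]
  have h2 : 0 ≤ φ s - φ 0 := by rw [hφ0]; linarith
  have := div_nonneg h2 (le_of_lt hs0)
  simpa [div_eq_mul_inv, sub_zero] using this

/-- Taylor residual bound of the prediction generalized equation evaluated at
the next optimizer, from an arbitrary point `x_k ∈ X`, under Assumption 1. -/
theorem stmt_15 (n : ℕ) (f : Eucl n → ℝ → ℝ)
    (G : Eucl n → ℝ → Eucl n)                        -- ∇ₓ f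
    (H : Eucl n → ℝ → (Eucl n →L[ℝ] Eucl n))         -- ∇²ₓₓ f
    (c : Eucl n → ℝ → Eucl n)                        -- ∇ₜₓ f
    (X : Set (Eucl n)) (m L C₀ : ℝ) (tk h : ℝ)
    (xstar : ℝ → Eucl n) (xk : Eucl n)
    (hm : 0 < m) (hmL : m ≤ L) (hC₀ : 0 ≤ C₀) (hh : 0 < h)
    (hX : X.Nonempty) (hXc : IsClosed X) (hXconv : Convex ℝ X)
    (hgrad : ∀ x t, HasGradientAt (fun y => f y t) (G x t) x)
    (hHess : ∀ x t, HasFDerivAt (fun y => G y t) (H x t) x)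
    (hct : ∀ x t, HasDerivAt (fun s => G x s) (c x t) t)
    -- Assumption 1: m I ⪯ ∇²ₓₓ f ⪯ L I, ‖∇ₜₓ f‖ ≤ C₀
    (hstrong : ∀ t x y, m * ‖x - y‖ ^ 2 ≤ (inner ℝ (G x t - G y t) (x - y) : ℝ))
    (hHlow : ∀ x t v, m * ‖v‖ ^ 2 ≤ (inner ℝ v (H x t v) : ℝ))
    (hHnorm : ∀ x t, ‖H x t‖ ≤ L)
    (hlip : ∀ t x y, ‖G x t - G y t‖ ≤ L * ‖x - y‖)
    (hcbound : ∀ x t, ‖c x t‖ ≤ C₀)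
    (htime : ∀ x t s, ‖G x t - G x s‖ ≤ C₀ * |t - s|)
    -- x*(t) is the minimizer of f(·;t) over X
    (hmin : ∀ t, xstar t ∈ X ∧ IsMinOn (fun x => f x t) X (xstar t))
    (hxk : xk ∈ X) :
    ‖G xk tk + H xk tk (xstar (tk + h) - xk) + h • c xk tk - G (xstar (tk + h)) (tk + h)‖ ≤
      2 * L * ‖xk - xstar tk‖ + 2 * h * C₀ * (1 + L / m) := by
  -- variational inequality at each time
  have hVI : ∀ t, ∀ y ∈ X, 0 ≤ (inner ℝ (G (xstar t) t) (y - xstar t) : ℝ) := by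
    intro t y hy
    refine var_ineq (fun x => f x t) _ _ _ (hgrad _ t) ?_
    intro s hs
    have hmem : xstar t + s • (y - xstar t) ∈ X := by
      have := hXconv (hmin t).1 hy (by linarith [hs.1, hs.2] : (0:ℝ) ≤ 1 - s) hs.1 (by ring)
      convert this using 1
      module
    exact (hmin t).2 hmem
  -- Lipschitz bound on the trajectory
  have htraj : ∀ t s, ‖xstar t - xstar s‖ ≤ C₀ * |t - s| / m := by
    intro t s
    have h1 : 0 ≤ (inner ℝ (G (xstar t) t) (xstar s - xstar t) : ℝ) := hVI t _ (hmin s).1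
    have h2 : 0 ≤ (inner ℝ (G (xstar s) s) (xstar t - xstar s) : ℝ) := hVI s _ (hmin t).1
    have hst := hstrong t (xstar s) (xstar t)
    have hkey : m * ‖xstar s - xstar t‖ ^ 2 ≤ C₀ * |t - s| * ‖xstar s - xstar t‖ := by
      have hsplit : (inner ℝ (G (xstar s) t - G (xstar t) t) (xstar s - xstar t) : ℝ)
          = inner ℝ (G (xstar s) t - G (xstar s) s) (xstar s - xstar t)
            + inner ℝ (G (xstar s) s) (xstar s - xstar t)
            + inner ℝ (G (xstar t) t) (xstar t - xstar s) := by
        rw [inner_sub_left, inner_sub_left,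
          show xstar t - xstar s = -(xstar s - xstar t) by abel, inner_neg_right]
        ring
      have hb1 : (inner ℝ (G (xstar s) t - G (xstar s) s) (xstar s - xstar t) : ℝ)
          ≤ C₀ * |t - s| * ‖xstar s - xstar t‖ :=
        (real_inner_le_norm _ _).trans
          (mul_le_mul_of_nonneg_right (htime _ t s) (norm_nonneg _))
      have hb2 : (inner ℝ (G (xstar s) s) (xstar s - xstar t) : ℝ) ≤ 0 := by
        rw [show xstar s - xstar t = -(xstar t - xstar s) by abel, inner_neg_right]
        linarith
      have hb3 : (inner ℝ (G (xstar t) t) (xstar t - xstar s) : ℝ) ≤ 0 := by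
        rw [show xstar t - xstar s = -(xstar s - xstar t) by abel, inner_neg_right]
        linarith
      calc m * ‖xstar s - xstar t‖ ^ 2 ≤ _ := hst
        _ = _ := hsplit
        _ ≤ C₀ * |t - s| * ‖xstar s - xstar t‖ := by linarith
    rcases eq_or_ne (‖xstar s - xstar t‖) 0 with hz | hz
    · rw [show xstar t - xstar s = -(xstar s - xstar t) by abel, norm_neg, hz]
      positivity
    · have hpos : 0 < ‖xstar s - xstar t‖ := lt_of_le_of_ne (norm_nonneg _) (Ne.symm hz)
      rw [show xstar t - xstar s = -(xstar s - xstar t) by abel, norm_neg, le_div_iff₀ hm]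
      nlinarith
  set x1 := xstar (tk + h) with hx1
  have hdist : ‖x1 - xk‖ ≤ ‖xk - xstar tk‖ + C₀ * h / m := by
    have h1 : ‖x1 - xstar tk‖ ≤ C₀ * h / m := by
      have := htraj (tk + h) tk
      simpa [abs_of_pos hh] using this
    calc ‖x1 - xk‖ = ‖(x1 - xstar tk) + (xstar tk - xk)‖ := by abel_nf
      _ ≤ ‖x1 - xstar tk‖ + ‖xstar tk - xk‖ := norm_add_le _ _
      _ ≤ C₀ * h / m + ‖xk - xstar tk‖ := by rw [norm_sub_rev (xstar tk)]; linarith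
      _ = _ := by ring
  have hsplit : G xk tk + H xk tk (x1 - xk) + h • c xk tk - G x1 (tk + h)
      = (G xk tk - G x1 tk) + H xk tk (x1 - xk) + h • c xk tk + (G x1 tk - G x1 (tk + h)) := by
    abel
  rw [hsplit]
  have b1 : ‖G xk tk - G x1 tk‖ ≤ L * ‖x1 - xk‖ := by
    have := hlip tk xk x1
    rwa [norm_sub_rev xk x1] at this
  have b2 : ‖H xk tk (x1 - xk)‖ ≤ L * ‖x1 - xk‖ :=
    ((H xk tk).le_opNorm _).trans (mul_le_mul_of_nonneg_right (hHnorm _ _) (norm_nonneg _))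
  have b3 : ‖h • c xk tk‖ ≤ h * C₀ := by
    rw [norm_smul, Real.norm_of_nonneg hh.le]
    exact mul_le_mul_of_nonneg_left (hcbound _ _) hh.le
  have b4 : ‖G x1 tk - G x1 (tk + h)‖ ≤ C₀ * h := by
    have := htime x1 tk (tk + h)
    simpa [abs_of_pos hh, abs_sub_comm] using this
  have hL0 : 0 ≤ L := le_trans hm.le hmL
  calc ‖(G xk tk - G x1 tk) + H xk tk (x1 - xk) + h • c xk tk + (G x1 tk - G x1 (tk + h))‖
      ≤ ‖(G xk tk - G x1 tk) + H xk tk (x1 - xk) + h • c xk tk‖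
        + ‖G x1 tk - G x1 (tk + h)‖ := norm_add_le _ _
    _ ≤ (‖(G xk tk - G x1 tk) + H xk tk (x1 - xk)‖ + ‖h • c xk tk‖)
        + ‖G x1 tk - G x1 (tk + h)‖ := by gcongr; exact norm_add_le _ _
    _ ≤ ((‖G xk tk - G x1 tk‖ + ‖H xk tk (x1 - xk)‖) + ‖h • c xk tk‖)
        + ‖G x1 tk - G x1 (tk + h)‖ := by gcongr; exact norm_add_le _ _
    _ ≤ L * ‖x1 - xk‖ + L * ‖x1 - xk‖ + h * C₀ + C₀ * h := by linarith
    _ ≤ 2 * L * (‖xk - xstar tk‖ + C₀ * h / m) + 2 * h * C₀ := by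
        nlinarith [mul_le_mul_of_nonneg_left hdist hL0]
    _ = 2 * L * ‖xk - xstar tk‖ + 2 * h * C₀ * (1 + L / m) := by field_simp; ring
end

section
/- Under Assumption 1, the prediction step of C-FOPC satisfies ‖x_{k+1|k} − x*(t_{k+1})‖ ≤ (2L/m)‖x_k − x*(t_k)‖ + Δ₁, where x_{k+1|k} is the exact solution of the linearized generalized equation at (x_k, t_k) over X, and Δ₁ = 2h(C₀/m)(1 + L/m). -/
/-- Prediction error bound of C-FOPC from an arbitrary point `x_k` under
Assumption 1 (Proposition 2, Case a). -/
theorem stmt_16 (n : ℕ) (f : Eucl n → ℝ → ℝ)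
    (G : Eucl n → ℝ → Eucl n)                        -- ∇ₓ f
    (H : Eucl n → ℝ → (Eucl n →L[ℝ] Eucl n))         -- ∇²ₓₓ f
    (c : Eucl n → ℝ → Eucl n)                        -- ∇ₜₓ f
    (X : Set (Eucl n)) (m L C₀ : ℝ) (tk h : ℝ)
    (xstar : ℝ → Eucl n) (xk xpred : Eucl n)
    (hm : 0 < m) (hmL : m ≤ L) (hC₀ : 0 ≤ C₀) (hh : 0 < h)
    (hX : X.Nonempty) (hXc : IsClosed X) (hXconv : Convex ℝ X)
    (hgrad : ∀ x t, HasGradientAt (fun y => f y t) (G x t) x)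
    (hHess : ∀ x t, HasFDerivAt (fun y => G y t) (H x t) x)
    (hct : ∀ x t, HasDerivAt (fun s => G x s) (c x t) t)
    -- Assumption 1
    (hstrong : ∀ t x y, m * ‖x - y‖ ^ 2 ≤ (inner ℝ (G x t - G y t) (x - y) : ℝ))
    (hHlow : ∀ x t v, m * ‖v‖ ^ 2 ≤ (inner ℝ v (H x t v) : ℝ))
    (hHnorm : ∀ x t, ‖H x t‖ ≤ L)
    (hlip : ∀ t x y, ‖G x t - G y t‖ ≤ L * ‖x - y‖)
    (hcbound : ∀ x t, ‖c x t‖ ≤ C₀)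
    (htime : ∀ x t s, ‖G x t - G x s‖ ≤ C₀ * |t - s|)
    -- x*(t) is the minimizer of f(·;t) over X
    (hmin : ∀ t, xstar t ∈ X ∧ IsMinOn (fun x => f x t) X (xstar t))
    (hxk : xk ∈ X)
    -- xpred solves the linearized generalized equation at (x_k, t_k)
    (hpred : InNormalCone X xpred
      (-(G xk tk + H xk tk (xpred - xk) + h • c xk tk))) :
    ‖xpred - xstar (tk + h)‖ ≤
      (2 * L / m) * ‖xk - xstar tk‖ + 2 * h * (C₀ / m) * (1 + L / m) := by
  obtain ⟨hpX, hpred2⟩ := hpred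
  -- Variational inequality at the minimizers
  have vi : ∀ t, ∀ y ∈ X, (0:ℝ) ≤ inner ℝ (G (xstar t) t) (y - xstar t) := by
    intro t y hy
    obtain ⟨hxX, hmin'⟩ := hmin t
    have hfd : HasFDerivWithinAt (fun x => f x t)
        (InnerProductSpace.toDual ℝ (Eucl n) (G (xstar t) t)) X (xstar t) :=
      ((hasGradientAt_iff_hasFDerivAt.mp (hgrad (xstar t) t))).hasFDerivWithinAt
    have hcone : y - xstar t ∈ posTangentConeAt X (xstar t) :=
      sub_mem_posTangentConeAt_of_segment_subset (hXconv.segment_subset hxX hy)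
    have := hmin'.localize.hasFDerivWithinAt_nonneg hfd hcone
    simpa [InnerProductSpace.toDual_apply_apply] using this
  set t1 := tk + h with ht1
  set a := xstar tk with hadef
  set b := xstar t1 with hbdef
  have haX : a ∈ X := (hmin tk).1
  have hbX : b ∈ X := (hmin t1).1
  -- drift bound
  have hdrift : ‖a - b‖ ≤ C₀ * h / m := by
    have h1 : (0:ℝ) ≤ inner ℝ (G a tk) (b - a) := vi tk b hbX
    have h2 : (0:ℝ) ≤ inner ℝ (G b t1) (a - b) := vi t1 a haX
    have h3 := hstrong t1 a b
    have h4 : ‖G a t1 - G a tk‖ ≤ C₀ * h := by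
      have := htime a t1 tk
      have : ‖G a t1 - G a tk‖ ≤ C₀ * |t1 - tk| := this
      simpa [ht1, abs_of_pos hh] using this
    have h5 : (inner ℝ (G a t1 - G a tk) (a - b) : ℝ) ≤ C₀ * h * ‖a - b‖ :=
      le_trans (real_inner_le_norm _ _) (by
        have := norm_nonneg (a - b)
        exact mul_le_mul_of_nonneg_right h4 this)
    have h6 : (inner ℝ (G a tk) (a - b) : ℝ) ≤ 0 := by
      have : (inner ℝ (G a tk) (b - a) : ℝ) = - inner ℝ (G a tk) (a - b) := by
        rw [← inner_neg_right]; congr 1; abel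
      linarith [h1, this ▸ h1]
    have h7 : m * ‖a - b‖ ^ 2 ≤ C₀ * h * ‖a - b‖ := by
      have hsplit : (inner ℝ (G a t1 - G b t1) (a - b) : ℝ) =
          inner ℝ (G a t1 - G a tk) (a - b) + inner ℝ (G a tk) (a - b)
            - inner ℝ (G b t1) (a - b) := by
        rw [inner_sub_left, inner_sub_left]; ring
      rw [hsplit] at h3
      linarith
    have hr : (0:ℝ) ≤ ‖a - b‖ := norm_nonneg _
    rcases eq_or_lt_of_le hr with he | he
    · rw [← he]
      positivity
    · rw [le_div_iff₀ hm]
      have := (mul_le_mul_iff_left₀ he).mp (by nlinarith : m * ‖a - b‖ * ‖a - b‖ ≤ C₀ * h * ‖a - b‖)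
      linarith
  -- main estimate
  set p := xpred with hpdef
  set e := p - b with hedef
  set u := G b t1 - G xk tk - H xk tk (b - xk) - h • c xk tk with hudef
  have key : m * ‖e‖ ^ 2 ≤ (inner ℝ u e : ℝ) := by
    have hHe : m * ‖e‖ ^ 2 ≤ (inner ℝ e (H xk tk e) : ℝ) := hHlow xk tk e
    have hsplitH : H xk tk e = H xk tk (p - xk) - H xk tk (b - xk) := by
      rw [← map_sub]; congr 1; simp [hedef]
    have hw : (inner ℝ (G xk tk + H xk tk (p - xk) + h • c xk tk) (b - p) : ℝ) ≥ 0 := by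
      have := hpred2 b hbX
      rw [inner_neg_left] at this
      linarith
    have hwe : (inner ℝ (G xk tk) e : ℝ) + inner ℝ (H xk tk (p - xk)) e
        + (inner ℝ ((h:ℝ) • c xk tk) e : ℝ) ≤ 0 := by
      have hbp : b - p = -e := by simp [hedef]
      rw [hbp, inner_neg_right, inner_add_left, inner_add_left] at hw
      linarith
    have hvip : (0:ℝ) ≤ inner ℝ (G b t1) e := vi t1 p hpX
    have hcomm : (inner ℝ e (H xk tk (p - xk)) : ℝ) = inner ℝ (H xk tk (p - xk)) e :=
      real_inner_comm _ _
    have hcomm2 : (inner ℝ e (H xk tk (b - xk)) : ℝ) = inner ℝ (H xk tk (b - xk)) e :=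
      real_inner_comm _ _
    have hexp : (inner ℝ u e : ℝ) = inner ℝ (G b t1) e - inner ℝ (G xk tk) e
        - inner ℝ (H xk tk (b - xk)) e - inner ℝ ((h:ℝ) • c xk tk) e := by
      rw [hudef, inner_sub_left, inner_sub_left, inner_sub_left]
    rw [hsplitH, inner_sub_right, hcomm, hcomm2] at hHe
    rw [hexp]
    linarith
  have hu : ‖u‖ ≤ 2 * L * ‖xk - b‖ + 2 * h * C₀ := by
    have hsplit : u = (G b t1 - G b tk) + (G b tk - G xk tk)
        + (-(H xk tk (b - xk))) + (-(h • c xk tk)) := by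
      rw [hudef]; abel
    have h1 : ‖G b t1 - G b tk‖ ≤ C₀ * h := by
      have := htime b t1 tk
      simpa [ht1, abs_of_pos hh] using this
    have h2 : ‖G b tk - G xk tk‖ ≤ L * ‖b - xk‖ := hlip tk b xk
    have h3 : ‖H xk tk (b - xk)‖ ≤ L * ‖b - xk‖ := by
      calc ‖H xk tk (b - xk)‖ ≤ ‖H xk tk‖ * ‖b - xk‖ := (H xk tk).le_opNorm _
        _ ≤ L * ‖b - xk‖ := mul_le_mul_of_nonneg_right (hHnorm xk tk) (norm_nonneg _)
    have h4 : ‖h • c xk tk‖ ≤ h * C₀ := by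
      rw [norm_smul, Real.norm_of_nonneg hh.le]
      exact mul_le_mul_of_nonneg_left (hcbound xk tk) hh.le
    have hbn : ‖b - xk‖ = ‖xk - b‖ := norm_sub_rev _ _
    calc ‖u‖ ≤ ‖(G b t1 - G b tk) + (G b tk - G xk tk) + (-(H xk tk (b - xk)))‖
            + ‖-(h • c xk tk)‖ := by rw [hsplit]; exact norm_add_le _ _
      _ ≤ ‖(G b t1 - G b tk) + (G b tk - G xk tk)‖ + ‖-(H xk tk (b - xk))‖
            + ‖-(h • c xk tk)‖ := by gcongr; exact norm_add_le _ _
      _ ≤ (‖G b t1 - G b tk‖ + ‖G b tk - G xk tk‖) + ‖-(H xk tk (b - xk))‖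
            + ‖-(h • c xk tk)‖ := by gcongr; exact norm_add_le _ _
      _ ≤ (C₀ * h + L * ‖b - xk‖) + L * ‖b - xk‖ + h * C₀ := by
            rw [norm_neg, norm_neg]; gcongr
      _ = 2 * L * ‖xk - b‖ + 2 * h * C₀ := by rw [hbn]; ring
  have hme : m * ‖e‖ ≤ 2 * L * ‖xk - b‖ + 2 * h * C₀ := by
    have hie : (inner ℝ u e : ℝ) ≤ ‖u‖ * ‖e‖ := real_inner_le_norm _ _
    have hre : (0:ℝ) ≤ ‖e‖ := norm_nonneg _
    rcases eq_or_lt_of_le hre with he | he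
    · rw [← he]
      have : (0:ℝ) ≤ ‖xk - b‖ := norm_nonneg _
      nlinarith
    · have h7 : m * ‖e‖ * ‖e‖ ≤ ‖u‖ * ‖e‖ := by nlinarith
      have := (mul_le_mul_iff_left₀ he).mp h7
      linarith
  have htri : ‖xk - b‖ ≤ ‖xk - a‖ + ‖a - b‖ := by
    rw [show xk - b = (xk - a) + (a - b) by abel]; exact norm_add_le _ _
  have hfin : ‖e‖ ≤ (2 * L * ‖xk - a‖ + 2 * L * (C₀ * h / m) + 2 * h * C₀) / m := by
    rw [le_div_iff₀ hm]
    have hA := mul_le_mul_of_nonneg_left htri (by linarith : (0:ℝ) ≤ 2 * L)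
    have hB := mul_le_mul_of_nonneg_left hdrift (by linarith : (0:ℝ) ≤ 2 * L)
    linarith
  have heq : (2 * L * ‖xk - a‖ + 2 * L * (C₀ * h / m) + 2 * h * C₀) / m
      = (2 * L / m) * ‖xk - a‖ + 2 * h * (C₀ / m) * (1 + L / m) := by
    field_simp; ring
  rw [heq] at hfin
  exact hfin
end

section
/- Under Assumptions 1 and 2, the prediction step of C-FOPC satisfies ‖x_{k+1|k} − x*(t_{k+1})‖ ≤ (C₁/(2m))‖x_k − x*(t_k)‖² + h(C₁C₀/m² + C₂/m)‖x_k − x*(t_k)‖ + Δ₂, where Δ₂ = (h²/2)[C₀²C₁/m³ + 2C₀C₂/m² + C₃/m]. -/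
open Set Filter Topology

lemma norm_sub_le_of_deriv_bound {E : Type*} [NormedAddCommGroup E] [NormedSpace ℝ E]
    {g g' : ℝ → E} (hg : ∀ s, HasDerivAt g (g' s) s)
    {a b : ℝ} (hb : ∀ s ∈ Set.Ico (0:ℝ) 1, ‖g' s‖ ≤ a + b * s) :
    ‖g 1 - g 0‖ ≤ a + b / 2 := by
  have hB : ∀ x : ℝ, HasDerivAt (fun s => a * s + b * s ^ 2 / 2) (a + b * x) x := by
    intro x
    have h1 : HasDerivAt (fun s : ℝ => a * s) (a * 1) x := (hasDerivAt_id x).const_mul a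
    have h2 : HasDerivAt (fun s : ℝ => b * s ^ 2 / 2) (b * ((2:ℕ) * x ^ 1) / 2) x :=
      ((hasDerivAt_pow 2 x).const_mul b).div_const 2
    refine (h1.add h2).congr_deriv ?_
    push_cast; ring
  have key : ∀ ⦃x⦄, x ∈ Set.Icc (0:ℝ) 1 → ‖g x - g 0‖ ≤ a * x + b * x ^ 2 / 2 :=
    image_norm_le_of_norm_deriv_right_le_deriv_boundary
      (f := fun s => g s - g 0) (f' := g')
      (fun x _ => ((hg x).sub_const (g 0)).continuousAt.continuousWithinAt)
      (fun x _ => ((hg x).sub_const (g 0)).hasDerivWithinAt)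
      (by simp) hB hb
  have h1 := key (Set.right_mem_Icc.2 zero_le_one)
  simp only [one_pow, mul_one] at h1
  linarith

lemma vi_of_isMinOn {n : ℕ} {X : Set (Eucl n)} (hXconv : Convex ℝ X)
    {φ : Eucl n → ℝ} {g x : Eucl n} (hx : x ∈ X) (hmin : IsMinOn φ X x)
    (hg : HasGradientAt φ g x) {y : Eucl n} (hy : y ∈ X) :
    0 ≤ (inner ℝ g (y - x) : ℝ) := by
  have hp : HasDerivAt (fun s : ℝ => x + s • (y - x)) (y - x) 0 := by
    simpa using ((hasDerivAt_id (0:ℝ)).smul_const (y - x)).const_add x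
  have hF : HasFDerivAt φ (InnerProductSpace.toDual ℝ _ g) x := hg
  have hx0 : x + (0:ℝ) • (y - x) = x := by simp
  rw [← hx0] at hF
  have hψ : HasDerivAt (fun s : ℝ => φ (x + s • (y - x))) ((inner ℝ g (y - x) : ℝ)) 0 := by
    have := hF.comp_hasDerivAt (0:ℝ) hp
    simp only [Function.comp_def, InnerProductSpace.toDual_apply_apply] at this; exact this
  have hmem : ∀ s ∈ Set.Icc (0:ℝ) 1, x + s • (y - x) ∈ X := by
    intro s hs
    have h2 := hXconv hx hy (by linarith [hs.2] : (0:ℝ) ≤ 1 - s) hs.1 (by ring)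
    convert h2 using 1
    rw [smul_sub]; module
  have hslope : Tendsto (slope (fun s : ℝ => φ (x + s • (y - x))) 0) (𝓝[>] 0)
      (𝓝 ((inner ℝ g (y - x) : ℝ))) :=
    (hasDerivAt_iff_tendsto_slope.1 hψ).mono_left
      (nhdsWithin_mono 0 (fun s hs => Set.mem_compl_singleton_iff.2 (LT.lt.ne' hs)))
  refine ge_of_tendsto hslope ?_
  filter_upwards [Ioc_mem_nhdsGT_of_mem (Set.left_mem_Ico.2 zero_lt_one)] with s hs
  rw [slope_def_field]
  have h0 : φ (x + (0:ℝ) • (y - x)) = φ x := by rw [hx0]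
  have h1 : φ x ≤ φ (x + s • (y - x)) := hmin (hmem s ⟨hs.1.le, hs.2⟩)
  have h2 : (0:ℝ) < s - 0 := by simpa using hs.1
  apply div_nonneg _ h2.le
  rw [h0]; linarith

set_option maxHeartbeats 1000000 in
/-- Prediction error bound of C-FOPC from an arbitrary point `x_k` under
Assumptions 1 and 2 (Proposition 2, Case b). -/
theorem stmt_17 (n : ℕ) (f : Eucl n → ℝ → ℝ)
    (G : Eucl n → ℝ → Eucl n)                        -- ∇ₓ f
    (H : Eucl n → ℝ → (Eucl n →L[ℝ] Eucl n))         -- ∇²ₓₓ f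
    (c : Eucl n → ℝ → Eucl n)                        -- ∇ₜₓ f
    (X : Set (Eucl n)) (m L C₀ C₁ C₂ C₃ : ℝ) (tk h : ℝ)
    (xstar : ℝ → Eucl n) (xk xpred : Eucl n)
    (hm : 0 < m) (hmL : m ≤ L) (hC₀ : 0 ≤ C₀) (hh : 0 < h)
    (hC₁ : 0 ≤ C₁) (hC₂ : 0 ≤ C₂) (hC₃ : 0 ≤ C₃)
    (hX : X.Nonempty) (hXc : IsClosed X) (hXconv : Convex ℝ X)
    (hgrad : ∀ x t, HasGradientAt (fun y => f y t) (G x t) x)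
    (hHess : ∀ x t, HasFDerivAt (fun y => G y t) (H x t) x)
    (hct : ∀ x t, HasDerivAt (fun s => G x s) (c x t) t)
    -- Assumption 1
    (hstrong : ∀ t x y, m * ‖x - y‖ ^ 2 ≤ (inner ℝ (G x t - G y t) (x - y) : ℝ))
    (hHlow : ∀ x t v, m * ‖v‖ ^ 2 ≤ (inner ℝ v (H x t v) : ℝ))
    (hHnorm : ∀ x t, ‖H x t‖ ≤ L)
    (hlip : ∀ t x y, ‖G x t - G y t‖ ≤ L * ‖x - y‖)
    (hcbound : ∀ x t, ‖c x t‖ ≤ C₀)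
    (htime : ∀ x t s, ‖G x t - G x s‖ ≤ C₀ * |t - s|)
    -- Assumption 2: ‖∇ₓₓₓ f‖ ≤ C₁, ‖∇ₜₓₓ f‖ ≤ C₂, ‖∇ₜₜₓ f‖ ≤ C₃
    (hHlip : ∀ x y t s, ‖H x t - H y s‖ ≤ C₁ * ‖x - y‖ + C₂ * |t - s|)
    (hclip : ∀ x y t s, ‖c x t - c y s‖ ≤ C₂ * ‖x - y‖ + C₃ * |t - s|)
    -- x*(t) is the minimizer of f(·;t) over X
    (hmin : ∀ t, xstar t ∈ X ∧ IsMinOn (fun x => f x t) X (xstar t))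
    (hxk : xk ∈ X)
    -- xpred solves the linearized generalized equation at (x_k, t_k)
    (hpred : InNormalCone X xpred
      (-(G xk tk + H xk tk (xpred - xk) + h • c xk tk))) :
    ‖xpred - xstar (tk + h)‖ ≤
      (C₁ / (2 * m)) * ‖xk - xstar tk‖ ^ 2 +
        h * (C₁ * C₀ / m ^ 2 + C₂ / m) * ‖xk - xstar tk‖ +
        (h ^ 2 / 2) * (C₀ ^ 2 * C₁ / m ^ 3 + 2 * C₀ * C₂ / m ^ 2 + C₃ / m) := by
  obtain ⟨hbX, hbmin⟩ := hmin (tk + h)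
  obtain ⟨haX, hamin⟩ := hmin tk
  set b : Eucl n := xstar (tk + h) with hb
  set a : Eucl n := xstar tk with ha
  set d : Eucl n := b - xk with hd
  set e : Eucl n := xpred - b with he
  set r : ℝ := ‖xk - a‖ with hr
  have hvi_b : ∀ y ∈ X, 0 ≤ (inner ℝ (G b (tk + h)) (y - b) : ℝ) :=
    fun y hy => vi_of_isMinOn hXconv hbX hbmin (hgrad b (tk + h)) hy
  have hvi_a : ∀ y ∈ X, 0 ≤ (inner ℝ (G a tk) (y - a) : ℝ) :=
    fun y hy => vi_of_isMinOn hXconv haX hamin (hgrad a tk) hy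
  -- Step 1: drift bound
  have hdrift : ‖b - a‖ ≤ C₀ / m * h := by
    have h1 := hvi_b a haX
    have h2 := hvi_a b hbX
    have h3 := hstrong (tk + h) b a
    have h4 : (inner ℝ (G a tk - G a (tk + h)) (b - a) : ℝ)
        ≤ ‖G a tk - G a (tk + h)‖ * ‖b - a‖ := real_inner_le_norm _ _
    have h5 : ‖G a tk - G a (tk + h)‖ ≤ C₀ * h := by
      have := htime a tk (tk + h)
      have habs : |tk - (tk + h)| = h := by
        rw [show tk - (tk + h) = -h by ring, abs_neg, abs_of_pos hh]
      rwa [habs] at this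
    have e1 : (inner ℝ (G b (tk + h)) (a - b) : ℝ)
        = - (inner ℝ (G b (tk + h)) (b - a) : ℝ) := by
      rw [← inner_neg_right]; congr 1; abel
    have e3 : (inner ℝ (G b (tk + h) - G a (tk + h)) (b - a) : ℝ)
        = (inner ℝ (G b (tk + h)) (b - a) : ℝ) - (inner ℝ (G a (tk + h)) (b - a) : ℝ) :=
      inner_sub_left _ _ _
    have e4 : (inner ℝ (G a tk - G a (tk + h)) (b - a) : ℝ)
        = (inner ℝ (G a tk) (b - a) : ℝ) - (inner ℝ (G a (tk + h)) (b - a) : ℝ) :=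
      inner_sub_left _ _ _
    have hkey : m * ‖b - a‖ ^ 2 ≤ C₀ * h * ‖b - a‖ := by
      nlinarith [norm_nonneg (b - a)]
    rcases (norm_nonneg (b - a)).eq_or_lt' with h0 | h0
    · rw [h0]; positivity
    · rw [div_mul_eq_mul_div, le_div_iff₀ hm]
      nlinarith
  -- Step 2: Taylor remainder bound
  have hA : ‖G b tk - G xk tk - H xk tk d‖ ≤ 0 + (C₁ * ‖d‖ ^ 2) / 2 := by
    have hg : ∀ s : ℝ, HasDerivAt (fun s : ℝ => G (xk + s • d) tk - s • (H xk tk d))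
        (H (xk + s • d) tk d - H xk tk d) s := by
      intro s
      have hpath : HasDerivAt (fun s : ℝ => xk + s • d) d s := by
        simpa using ((hasDerivAt_id s).smul_const d).const_add xk
      have h1 : HasDerivAt (fun s : ℝ => G (xk + s • d) tk) (H (xk + s • d) tk d) s :=
        by have := (hHess (xk + s • d) tk).comp_hasDerivAt s hpath; exact this
      have h2 : HasDerivAt (fun s : ℝ => s • (H xk tk d)) (H xk tk d) s := by
        simpa using (hasDerivAt_id s).smul_const (H xk tk d)
      exact h1.sub h2
    have hbound : ∀ s ∈ Set.Ico (0:ℝ) 1,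
        ‖H (xk + s • d) tk d - H xk tk d‖ ≤ 0 + (C₁ * ‖d‖ ^ 2) * s := by
      intro s hs
      have h1 : H (xk + s • d) tk d - H xk tk d = (H (xk + s • d) tk - H xk tk) d := by
        simp [ContinuousLinearMap.sub_apply]
      rw [h1]
      calc ‖(H (xk + s • d) tk - H xk tk) d‖
          ≤ ‖H (xk + s • d) tk - H xk tk‖ * ‖d‖ := ContinuousLinearMap.le_opNorm _ _
        _ ≤ (C₁ * ‖xk + s • d - xk‖ + C₂ * |tk - tk|) * ‖d‖ :=
            mul_le_mul_of_nonneg_right (hHlip _ _ _ _) (norm_nonneg d)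
        _ = 0 + (C₁ * ‖d‖ ^ 2) * s := by
            rw [show xk + s • d - xk = s • d by abel, norm_smul,
              Real.norm_eq_abs, abs_of_nonneg hs.1]
            simp; ring
    have hres := norm_sub_le_of_deriv_bound hg hbound
    have heq : (G (xk + (1:ℝ) • d) tk - (1:ℝ) • (H xk tk d))
        - (G (xk + (0:ℝ) • d) tk - (0:ℝ) • (H xk tk d))
        = G b tk - G xk tk - H xk tk d := by
      simp only [one_smul, zero_smul, add_zero, sub_zero]
      rw [show xk + d = b by rw [hd]; abel]
      abel
    rwa [heq] at hres
  have hB : ‖G b (tk + h) - G b tk - h • c xk tk‖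
      ≤ (C₂ * ‖d‖ * h) + (C₃ * h ^ 2) / 2 := by
    have hg : ∀ s : ℝ, HasDerivAt (fun s : ℝ => G b (tk + s * h) - (s * h) • c xk tk)
        (h • c b (tk + s * h) - h • c xk tk) s := by
      intro s
      have htp : HasDerivAt (fun s : ℝ => tk + s * h) h s := by
        simpa using ((hasDerivAt_id s).mul_const h).const_add tk
      have h1 : HasDerivAt (fun s : ℝ => G b (tk + s * h)) (h • c b (tk + s * h)) s :=
        (hct b (tk + s * h)).scomp s htp
      have h2 : HasDerivAt (fun s : ℝ => (s * h) • c xk tk) (h • c xk tk) s := by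
        simpa using ((hasDerivAt_id s).mul_const h).smul_const (c xk tk)
      exact h1.sub h2
    have hbound : ∀ s ∈ Set.Ico (0:ℝ) 1,
        ‖h • c b (tk + s * h) - h • c xk tk‖ ≤ (C₂ * ‖d‖ * h) + (C₃ * h ^ 2) * s := by
      intro s hs
      rw [← smul_sub, norm_smul, Real.norm_eq_abs, abs_of_pos hh]
      have h1 := hclip b xk (tk + s * h) tk
      have h2 : |tk + s * h - tk| = s * h := by
        rw [show tk + s * h - tk = s * h by ring, abs_of_nonneg (mul_nonneg hs.1 hh.le)]
      rw [h2] at h1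
      have h3 : ‖b - xk‖ = ‖d‖ := by rw [hd]
      rw [h3] at h1
      calc h * ‖c b (tk + s * h) - c xk tk‖
          ≤ h * (C₂ * ‖d‖ + C₃ * (s * h)) := mul_le_mul_of_nonneg_left h1 hh.le
        _ = (C₂ * ‖d‖ * h) + (C₃ * h ^ 2) * s := by ring
    have hres := norm_sub_le_of_deriv_bound hg hbound
    have heq : (G b (tk + 1 * h) - ((1:ℝ) * h) • c xk tk)
        - (G b (tk + 0 * h) - ((0:ℝ) * h) • c xk tk)
        = G b (tk + h) - G b tk - h • c xk tk := by
      rw [one_mul, zero_mul, add_zero, zero_smul]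
      abel
    rwa [heq] at hres
  set R : Eucl n := G b (tk + h) - (G xk tk + H xk tk d + h • c xk tk) with hR
  have hTaylor : ‖R‖ ≤ C₁ / 2 * ‖d‖ ^ 2 + C₂ * h * ‖d‖ + C₃ / 2 * h ^ 2 := by
    have hsplit : R = (G b tk - G xk tk - H xk tk d)
        + (G b (tk + h) - G b tk - h • c xk tk) := by rw [hR]; abel
    calc ‖R‖ ≤ ‖G b tk - G xk tk - H xk tk d‖
          + ‖G b (tk + h) - G b tk - h • c xk tk‖ := by rw [hsplit]; exact norm_add_le _ _
      _ ≤ C₁ / 2 * ‖d‖ ^ 2 + C₂ * h * ‖d‖ + C₃ / 2 * h ^ 2 := by linarith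
  -- Step 3: m‖e‖ ≤ ‖R‖
  have hEbound : m * ‖e‖ ≤ ‖R‖ := by
    have hb_pred : (0:ℝ) ≤ inner ℝ (G b (tk + h)) e := by
      have := hvi_b xpred hpred.1
      rwa [← he] at this
    have hHe := hHlow xk tk e
    have h2 : (0:ℝ) ≤ (inner ℝ (G xk tk + H xk tk (xpred - xk) + h • c xk tk) (b - xpred) : ℝ) := by
      have h1 := hpred.2 b hbX
      rw [inner_neg_left] at h1; linarith
    have h3 : (inner ℝ (G xk tk + H xk tk (xpred - xk) + h • c xk tk) e : ℝ) ≤ 0 := by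
      have hbe : b - xpred = -e := by rw [he]; abel
      rw [hbe, inner_neg_right] at h2; linarith
    have hv : G xk tk + H xk tk (xpred - xk) + h • c xk tk
        = (G b (tk + h) - R) + H xk tk e := by
      rw [hR]
      have hde : xpred - xk = d + e := by rw [hd, he]; abel
      rw [hde, map_add]
      abel
    rw [hv, inner_add_left, inner_sub_left] at h3
    have h5 : (inner ℝ R e : ℝ) ≤ ‖R‖ * ‖e‖ := real_inner_le_norm _ _
    have h6 : (inner ℝ e (H xk tk e) : ℝ) = inner ℝ (H xk tk e) e := real_inner_comm _ _
    rcases (norm_nonneg e).eq_or_lt' with h0 | h0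
    · rw [h0, mul_zero]; exact norm_nonneg R
    · nlinarith
  -- Step 4: combine
  have hD : ‖d‖ ≤ r + C₀ / m * h := by
    have hsplit : d = (b - a) + (a - xk) := by rw [hd]; abel
    have hax : ‖a - xk‖ = r := by rw [hr, norm_sub_rev]
    calc ‖d‖ ≤ ‖b - a‖ + ‖a - xk‖ := by rw [hsplit]; exact norm_add_le _ _
      _ ≤ C₀ / m * h + r := by rw [hax]; linarith
      _ = r + C₀ / m * h := by ring
  have hK0 : (0:ℝ) ≤ r + C₀ / m * h := by
    have : (0:ℝ) ≤ r := norm_nonneg _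
    have : (0:ℝ) ≤ C₀ / m * h := by positivity
    linarith [norm_nonneg (xk - a)]
  have hS : m * ‖e‖ ≤ C₁ / 2 * (r + C₀ / m * h) ^ 2 + C₂ * h * (r + C₀ / m * h)
      + C₃ / 2 * h ^ 2 := by
    have hsq : C₁ * (‖d‖ * ‖d‖) ≤ C₁ * ((r + C₀ / m * h) * (r + C₀ / m * h)) :=
      mul_le_mul_of_nonneg_left (mul_le_mul hD hD (norm_nonneg d) hK0) hC₁
    have hlin : C₂ * h * ‖d‖ ≤ C₂ * h * (r + C₀ / m * h) :=
      mul_le_mul_of_nonneg_left hD (mul_nonneg hC₂ hh.le)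
    nlinarith [hEbound, hTaylor]
  have hgoal : ‖e‖ ≤ (C₁ / 2 * (r + C₀ / m * h) ^ 2 + C₂ * h * (r + C₀ / m * h)
      + C₃ / 2 * h ^ 2) / m := by
    rw [le_div_iff₀ hm]; linarith
  have hfinal : (C₁ / 2 * (r + C₀ / m * h) ^ 2 + C₂ * h * (r + C₀ / m * h)
      + C₃ / 2 * h ^ 2) / m
      = (C₁ / (2 * m)) * r ^ 2 + h * (C₁ * C₀ / m ^ 2 + C₂ / m) * r
        + (h ^ 2 / 2) * (C₀ ^ 2 * C₁ / m ^ 3 + 2 * C₀ * C₂ / m ^ 2 + C₃ / m) := by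
    field_simp
    ring
  linarith [hfinal.le, hfinal.ge]
end
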